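/- arXiv:2403.08627 — 4 statements merged into one kernel-verified Lean document; each statement's English description precedes it below -/
import Mathlib

section
/- (Lemma 2, covariance formula) For every α ∈ ℝ, the autocovariance of the scalar-coefficient vector-valued multifidelity estimator is Cov[ĝ^α_MF, ĝ^α_MF] = (1/m_1) C_{11} + (1/m_1 − 1/m_2)(α² C_{22} − α C_{12} − α C_{21}). -/
open MeasureTheory
open scoped Matrix
open scoped ENNReal

section Aux
variable {𝒵 : Type*} [MeasurableSpace 𝒵] (π : Measure 𝒵) [IsProbabilityMeasure π] {n : ℕ}

lemma aux_map_eval (k : Fin n) :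
    (Measure.pi fun _ : Fin n => π).map (fun ω => ω k) = π := by
  classical
  ext s hs
  rw [Measure.map_apply (measurable_pi_apply k) hs]
  have h : (fun ω : Fin n → 𝒵 => ω k) ⁻¹' s
      = Set.pi Set.univ (Function.update (fun _ : Fin n => Set.univ) k s) :=
    Set.eval_preimage
  rw [h, Measure.pi_pi]
  rw [Finset.prod_eq_single k]
  · simp
  · intro b _ hb; simp [Function.update_of_ne hb]
  · simp

lemma aux_memLp_eval (k : Fin n) {f : 𝒵 → ℝ} (hf : MemLp f 2 π) :
    MemLp (fun ω : Fin n → 𝒵 => f (ω k)) 2 (Measure.pi fun _ : Fin n => π) := by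
  have h := aux_map_eval π k
  have hf' : MemLp f 2 ((Measure.pi fun _ : Fin n => π).map (fun ω => ω k)) := by rwa [h]
  exact (memLp_map_measure_iff hf'.1 (measurable_pi_apply k).aemeasurable).1 hf'

lemma aux_integral_eval (k : Fin n) {f : 𝒵 → ℝ} (hf : AEStronglyMeasurable f π) :
    ∫ ω, f (ω k) ∂(Measure.pi fun _ : Fin n => π) = ∫ z, f z ∂π := by
  have h := aux_map_eval π k
  have hf' : AEStronglyMeasurable f ((Measure.pi fun _ : Fin n => π).map (fun ω => ω k)) := by
    rwa [h]
  have h2 : (∫ z, f z ∂π)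
      = ∫ z, f z ∂((Measure.pi fun _ : Fin n => π).map (fun ω => ω k)) := by rw [h]
  rw [h2, integral_map (measurable_pi_apply k).aemeasurable hf']

lemma aux_integral_eval_mul {k l : Fin n} (hkl : k ≠ l) (f g : 𝒵 → ℝ) :
    ∫ ω, f (ω k) * g (ω l) ∂(Measure.pi fun _ : Fin n => π)
      = (∫ z, f z ∂π) * (∫ z, g z ∂π) := by
  classical
  letI : MeasureSpace 𝒵 := ⟨π⟩
  set F : Fin n → 𝒵 → ℝ := fun i => if i = k then f else if i = l then g else 1 with hF
  have hprod : ∀ ω : Fin n → 𝒵, f (ω k) * g (ω l) = ∏ i, F i (ω i) := by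
    intro ω
    rw [← Finset.mul_prod_erase Finset.univ _ (Finset.mem_univ k),
      ← Finset.mul_prod_erase _ _ (Finset.mem_erase.2 ⟨Ne.symm hkl, Finset.mem_univ l⟩)]
    have h1 : F k (ω k) = f (ω k) := by simp [hF]
    have h2 : F l (ω l) = g (ω l) := by simp [hF, Ne.symm hkl]
    rw [h1, h2, Finset.prod_eq_one, mul_one]
    intro i hi
    simp only [Finset.mem_erase] at hi
    simp [hF, hi.1, hi.2.1]
  have hvol : (Measure.pi fun _ : Fin n => π) = (volume : Measure (Fin n → 𝒵)) := by
    rw [volume_pi]; rfl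
  simp_rw [hprod, hvol]
  rw [MeasureTheory.integral_fintype_prod_volume_eq_prod (ι := Fin n) F]
  rw [← Finset.mul_prod_erase Finset.univ _ (Finset.mem_univ k),
    ← Finset.mul_prod_erase _ _ (Finset.mem_erase.2 ⟨Ne.symm hkl, Finset.mem_univ l⟩)]
  have h1 : (∫ x, F k x) = ∫ z, f z ∂π := by simp [hF]; rfl
  have h2 : (∫ x, F l x) = ∫ z, g z ∂π := by simp [hF, Ne.symm hkl]; rfl
  rw [h1, h2, Finset.prod_eq_one, mul_one]
  intro i hi
  simp only [Finset.mem_erase] at hi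
  simp only [hF, if_neg hi.2.1, if_neg hi.1]
  simp

lemma aux_L2_mul {α : Type*} [MeasurableSpace α] {μ : Measure α} {f g : α → ℝ}
    (hf : MemLp f 2 μ) (hg : MemLp g 2 μ) : Integrable (fun x => f x * g x) μ := by
  have h : (1 : ℝ≥0∞) / 1 = 1 / 2 + 1 / 2 := by
    rw [ENNReal.add_halves]; simp
  have := (haveI : ENNReal.HolderTriple 2 2 1 := ⟨by simpa [one_div] using h.symm⟩; hg.smul hf (r := 1))
  rw [memLp_one_iff_integrable] at this
  exact this.congr (Filter.Eventually.of_forall fun x => by simp [mul_comm])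

lemma aux_card_filter {m1 m2 : ℕ} (h : m1 ≤ m2) :
    (Finset.univ.filter fun i : Fin m2 => (i : ℕ) < m1).card = m1 := by
  classical
  have heq : (Finset.univ.filter fun i : Fin m2 => (i : ℕ) < m1)
      = Finset.map (Fin.castLEEmb h) Finset.univ := by
    ext i
    simp only [Finset.mem_filter, Finset.mem_univ, true_and, Finset.mem_map,
      Fin.castLEEmb, Function.Embedding.coeFn_mk]
    constructor
    · intro hi
      exact ⟨⟨(i : ℕ), hi⟩, by ext; simp [Fin.castLE]⟩
    · rintro ⟨j, rfl⟩
      exact j.2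
  rw [heq, Finset.card_map, Finset.card_univ, Fintype.card_fin]

end Aux

/-- Cross-covariance matrix of two random vectors `V, W : Ω → ℝ^d` under measure `P`:
`(covMatrix P V W) i j = E[Vᵢ Wⱼ] − E[Vᵢ] E[Wⱼ]`. -/
noncomputable def covMatrix {Ω : Type*} [MeasurableSpace Ω] (P : Measure Ω)
    {d : ℕ} (V W : Ω → Fin d → ℝ) : Matrix (Fin d) (Fin d) ℝ :=
  Matrix.of fun i j =>
    (∫ ω, V ω i * W ω j ∂P) - (∫ ω, V ω i ∂P) * (∫ ω, W ω j ∂P)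

/-- Scalar-coefficient vector-valued bi-fidelity Monte Carlo estimator
`ĝ^α_MF = (1/m₁) Σ_{i<m₁} g¹(zᵢ) + α ((1/m₂) Σ_{i<m₂} g²(zᵢ) − (1/m₁) Σ_{i<m₁} g²(zᵢ))`,
as a function of the training inputs `ω ∈ 𝒵^{m₂}`. -/
noncomputable def gMF {𝒵 : Type*} {d : ℕ} (g1 g2 : 𝒵 → Fin d → ℝ) (m1 m2 : ℕ) (α : ℝ)
    (ω : Fin m2 → 𝒵) : Fin d → ℝ := fun j =>
  (1 / (m1 : ℝ)) * ∑ i ∈ Finset.univ.filter (fun i : Fin m2 => (i : ℕ) < m1), g1 (ω i) j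
  + α * ((1 / (m2 : ℝ)) * ∑ i : Fin m2, g2 (ω i) j
    - (1 / (m1 : ℝ)) * ∑ i ∈ Finset.univ.filter (fun i : Fin m2 => (i : ℕ) < m1), g2 (ω i) j)

/-- Matrix-coefficient vector-valued bi-fidelity Monte Carlo estimator
`ĝ^A_MF = (1/m₁) Σ_{i<m₁} g¹(zᵢ) + A ((1/m₂) Σ_{i<m₂} g²(zᵢ) − (1/m₁) Σ_{i<m₁} g²(zᵢ))`. -/
noncomputable def gMFA {𝒵 : Type*} {d : ℕ} (g1 g2 : 𝒵 → Fin d → ℝ) (m1 m2 : ℕ)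
    (A : Matrix (Fin d) (Fin d) ℝ) (ω : Fin m2 → 𝒵) : Fin d → ℝ :=
  (fun j => (1 / (m1 : ℝ)) *
      ∑ i ∈ Finset.univ.filter (fun i : Fin m2 => (i : ℕ) < m1), g1 (ω i) j)
  + A *ᵥ (fun j => (1 / (m2 : ℝ)) * ∑ i : Fin m2, g2 (ω i) j
      - (1 / (m1 : ℝ)) * ∑ i ∈ Finset.univ.filter (fun i : Fin m2 => (i : ℕ) < m1), g2 (ω i) j)

/-- Lemma 2, covariance formula: for every α ∈ ℝ,
Cov[ĝ^α_MF, ĝ^α_MF] = (1/m₁) C₁₁ + (1/m₁ − 1/m₂)(α² C₂₂ − α C₁₂ − α C₂₁). -/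
theorem stmt_8 {𝒵 : Type*} [MeasurableSpace 𝒵] (π : Measure 𝒵) [IsProbabilityMeasure π]
    {d' : ℕ} (g1 g2 : 𝒵 → Fin d' → ℝ)
    (hg1m : ∀ j, Measurable fun z => g1 z j) (hg2m : ∀ j, Measurable fun z => g2 z j)
    (hg1L2 : ∀ j, MemLp (fun z => g1 z j) 2 π) (hg2L2 : ∀ j, MemLp (fun z => g2 z j) 2 π)
    {m1 m2 : ℕ} (hm1 : 0 < m1) (hm12 : m1 ≤ m2) :
    ∀ α : ℝ,
      covMatrix (Measure.pi fun _ : Fin m2 => π) (gMF g1 g2 m1 m2 α) (gMF g1 g2 m1 m2 α)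
        = (1 / (m1 : ℝ)) • covMatrix π g1 g1
          + ((1 / (m1 : ℝ)) - 1 / (m2 : ℝ)) •
            (α ^ 2 • covMatrix π g2 g2 - α • covMatrix π g1 g2 - α • covMatrix π g2 g1) := by
  intro α
  classical
  have hm2 : 0 < m2 := lt_of_lt_of_le hm1 hm12
  have hm1' : (m1 : ℝ) ≠ 0 := Nat.cast_ne_zero.2 hm1.ne'
  have hm2' : (m2 : ℝ) ≠ 0 := Nat.cast_ne_zero.2 hm2.ne'
  set P : Measure (Fin m2 → 𝒵) := Measure.pi fun _ : Fin m2 => π with hPdef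
  set a : Fin m2 → ℝ := fun k => if (k : ℕ) < m1 then 1 / (m1 : ℝ) else 0 with ha
  set b : Fin m2 → ℝ := fun k => α / m2 - α * a k with hb
  set H : Fin d' → Fin m2 → 𝒵 → ℝ := fun j k z => a k * g1 z j + b k * g2 z j with hHdef
  -- basic integrability facts
  have hHL2 : ∀ j k, MemLp (H j k) 2 π := fun j k =>
    ((hg1L2 j).const_mul (a k)).add ((hg2L2 j).const_mul (b k))
  have hHm : ∀ j k, Measurable (H j k) := fun j k =>
    ((hg1m j).const_mul (a k)).add ((hg2m j).const_mul (b k))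
  have hHint : ∀ j k, Integrable (H j k) π := fun j k => (hHL2 j k).integrable one_le_two
  have hHevalL2 : ∀ j k, MemLp (fun ω : Fin m2 → 𝒵 => H j k (ω k)) 2 P := fun j k =>
    aux_memLp_eval π k (hHL2 j k)
  -- decomposition of the estimator
  have e1 : ∀ v : Fin m2 → ℝ, ∑ k, a k * v k
      = (1 / (m1 : ℝ)) * ∑ k ∈ Finset.univ.filter (fun i : Fin m2 => (i : ℕ) < m1), v k := by
    intro v
    rw [Finset.mul_sum, Finset.sum_filter]
    refine Finset.sum_congr rfl fun k _ => ?_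
    by_cases hk : (k : ℕ) < m1 <;> simp [ha, hk]
  have hV : ∀ (ω : Fin m2 → 𝒵) (j : Fin d'),
      gMF g1 g2 m1 m2 α ω j = ∑ k, H j k (ω k) := by
    intro ω j
    have e2 : ∑ k, H j k (ω k)
        = (∑ k, a k * g1 (ω k) j) + ∑ k, b k * g2 (ω k) j := Finset.sum_add_distrib
    have e3 : ∑ k, b k * g2 (ω k) j
        = (α / m2) * (∑ k, g2 (ω k) j) - α * ∑ k, a k * g2 (ω k) j := by
      rw [Finset.mul_sum, Finset.mul_sum, ← Finset.sum_sub_distrib]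
      exact Finset.sum_congr rfl fun k _ => by simp only [hb]; ring
    rw [e2, e3, e1 (fun k => g1 (ω k) j), e1 (fun k => g2 (ω k) j)]
    simp only [gMF]
    ring
  -- integrals
  set I : Fin d' → Fin m2 → ℝ := fun j k => ∫ z, H j k z ∂π with hIdef
  have hI : ∀ j k, I j k = a k * (∫ z, g1 z j ∂π) + b k * ∫ z, g2 z j ∂π := by
    intro j k
    simp only [hIdef, hHdef]
    rw [integral_add ((hg1L2 j).integrable one_le_two |>.const_mul _)
      ((hg2L2 j).integrable one_le_two |>.const_mul _),
      integral_const_mul, integral_const_mul]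
  have hVint : ∀ j, ∫ ω, gMF g1 g2 m1 m2 α ω j ∂P = ∑ k, I j k := by
    intro j
    simp_rw [hV]
    rw [integral_finset_sum _ fun k _ => (hHevalL2 j k).integrable one_le_two]
    exact Finset.sum_congr rfl fun k _ => aux_integral_eval π k (hHL2 j k).1
  have hVV : ∀ i j, ∫ ω, gMF g1 g2 m1 m2 α ω i * gMF g1 g2 m1 m2 α ω j ∂P
      = ∑ k, ∑ l, (if k = l then ∫ z, H i k z * H j k z ∂π else I i k * I j l) := by
    intro i j
    have hexp : ∀ ω : Fin m2 → 𝒵, gMF g1 g2 m1 m2 α ω i * gMF g1 g2 m1 m2 α ω j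
        = ∑ k, ∑ l, H i k (ω k) * H j l (ω l) := by
      intro ω
      rw [hV ω i, hV ω j, Finset.sum_mul_sum]
    simp_rw [hexp]
    rw [integral_finset_sum _ fun k _ => integrable_finset_sum _ fun l _ =>
      aux_L2_mul (hHevalL2 i k) (hHevalL2 j l)]
    refine Finset.sum_congr rfl fun k _ => ?_
    rw [integral_finset_sum _ fun l _ => aux_L2_mul (hHevalL2 i k) (hHevalL2 j l)]
    refine Finset.sum_congr rfl fun l _ => ?_
    by_cases hkl : k = l
    · subst hkl
      rw [if_pos rfl]
      exact aux_integral_eval π k ((hHm i k).mul (hHm j k)).aestronglyMeasurable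
    · rw [if_neg hkl, aux_integral_eval_mul π hkl,
        show (∫ z, H i k z ∂π) = I i k from rfl, show (∫ z, H j l z ∂π) = I j l from rfl]
  -- per-coordinate covariance
  have hM : ∀ (i j : Fin d') (k : Fin m2),
      (∫ z, H i k z * H j k z ∂π) - I i k * I j k
        = a k ^ 2 * ((∫ z, g1 z i * g1 z j ∂π) - (∫ z, g1 z i ∂π) * ∫ z, g1 z j ∂π)
          + (a k * b k) * (((∫ z, g1 z i * g2 z j ∂π) - (∫ z, g1 z i ∂π) * ∫ z, g2 z j ∂π)
            + ((∫ z, g2 z i * g1 z j ∂π) - (∫ z, g2 z i ∂π) * ∫ z, g1 z j ∂π))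
          + b k ^ 2 * ((∫ z, g2 z i * g2 z j ∂π) - (∫ z, g2 z i ∂π) * ∫ z, g2 z j ∂π) := by
    intro i j k
    have int11 : Integrable (fun z => g1 z i * g1 z j) π := aux_L2_mul (hg1L2 i) (hg1L2 j)
    have int12 : Integrable (fun z => g1 z i * g2 z j) π := aux_L2_mul (hg1L2 i) (hg2L2 j)
    have int21 : Integrable (fun z => g2 z i * g1 z j) π := aux_L2_mul (hg2L2 i) (hg1L2 j)
    have int22 : Integrable (fun z => g2 z i * g2 z j) π := aux_L2_mul (hg2L2 i) (hg2L2 j)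
    have hfun : (fun z => H i k z * H j k z)
        = fun z => (a k * a k) * (g1 z i * g1 z j) + ((a k * b k) * (g1 z i * g2 z j)
          + ((b k * a k) * (g2 z i * g1 z j) + (b k * b k) * (g2 z i * g2 z j))) :=
      funext fun z => by simp only [hHdef]; ring
    have i1 : Integrable (fun z => (a k * a k) * (g1 z i * g1 z j)) π := int11.const_mul _
    have i2 : Integrable (fun z => (a k * b k) * (g1 z i * g2 z j)) π := int12.const_mul _
    have i3 : Integrable (fun z => (b k * a k) * (g2 z i * g1 z j)) π := int21.const_mul _
    have i4 : Integrable (fun z => (b k * b k) * (g2 z i * g2 z j)) π := int22.const_mul _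
    have i34 : Integrable (fun z => (b k * a k) * (g2 z i * g1 z j)
        + (b k * b k) * (g2 z i * g2 z j)) π := i3.add i4
    have i234 : Integrable (fun z => (a k * b k) * (g1 z i * g2 z j)
        + ((b k * a k) * (g2 z i * g1 z j) + (b k * b k) * (g2 z i * g2 z j))) π := i2.add i34
    rw [hfun, integral_add i1 i234, integral_add i2 i34, integral_add i3 i4,
      integral_const_mul, integral_const_mul, integral_const_mul, integral_const_mul,
      hI i k, hI j k]
    ring
  -- coefficient sums
  have hsa : ∑ k, a k = 1 := by
    simp only [ha]
    rw [Finset.sum_ite, Finset.sum_const, Finset.sum_const_zero, add_zero,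
      aux_card_filter hm12, nsmul_eq_mul]
    field_simp
  have hsa2 : ∑ k, a k ^ 2 = 1 / (m1 : ℝ) := by
    have : ∀ k : Fin m2, a k ^ 2 = if (k : ℕ) < m1 then (1 / (m1 : ℝ)) ^ 2 else 0 := by
      intro k; by_cases hk : (k : ℕ) < m1 <;> simp [ha, hk]
    simp_rw [this]
    rw [Finset.sum_ite, Finset.sum_const, Finset.sum_const_zero, add_zero,
      aux_card_filter hm12, nsmul_eq_mul]
    field_simp
  have hsab : ∑ k, a k * b k = α / m2 - α / m1 := by
    have : ∀ k : Fin m2, a k * b k = (α / m2) * a k - α * a k ^ 2 := by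
      intro k; simp only [hb]; ring
    simp_rw [this]
    rw [Finset.sum_sub_distrib, ← Finset.mul_sum, ← Finset.mul_sum, hsa, hsa2]
    field_simp
  have hsb2 : ∑ k, b k ^ 2 = α ^ 2 / m1 - α ^ 2 / m2 := by
    have : ∀ k : Fin m2, b k ^ 2
        = α ^ 2 / m2 ^ 2 - (2 * α ^ 2 / m2) * a k + α ^ 2 * a k ^ 2 := by
      intro k; simp only [hb]; ring
    simp_rw [this]
    rw [Finset.sum_add_distrib, Finset.sum_sub_distrib, ← Finset.mul_sum, ← Finset.mul_sum,
      hsa, hsa2, Finset.sum_const, Finset.card_univ, Fintype.card_fin, nsmul_eq_mul]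
    field_simp
    ring
  -- assemble
  ext i j
  show (∫ ω, gMF g1 g2 m1 m2 α ω i * gMF g1 g2 m1 m2 α ω j ∂P)
      - (∫ ω, gMF g1 g2 m1 m2 α ω i ∂P) * (∫ ω, gMF g1 g2 m1 m2 α ω j ∂P) = _
  rw [hVV i j, hVint i, hVint j, Finset.sum_mul_sum, ← Finset.sum_sub_distrib]
  have hinner : ∀ k : Fin m2,
      (∑ l, (if k = l then ∫ z, H i k z * H j k z ∂π else I i k * I j l))
        - ∑ l, I i k * I j l
      = (∫ z, H i k z * H j k z ∂π) - I i k * I j k := by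
    intro k
    rw [← Finset.sum_sub_distrib]
    have : ∀ l : Fin m2,
        (if k = l then ∫ z, H i k z * H j k z ∂π else I i k * I j l) - I i k * I j l
        = if k = l then (∫ z, H i k z * H j k z ∂π) - I i k * I j k else 0 := by
      intro l
      by_cases hkl : k = l
      · subst hkl; simp
      · simp [hkl]
    simp_rw [this]
    rw [Finset.sum_ite_eq]
    simp
  simp_rw [hinner, hM]
  rw [Finset.sum_add_distrib, Finset.sum_add_distrib, ← Finset.sum_mul, ← Finset.sum_mul,
    ← Finset.sum_mul, hsa2, hsab, hsb2]
  simp only [covMatrix, Matrix.add_apply, Matrix.smul_apply, Matrix.sub_apply,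
    Matrix.of_apply, smul_eq_mul]
  ring
end

section
/- (Theorem 2) Set g^(k)(z) = x(z) f^(k)(z) for k = 1, 2 and let C_{jk} be the cross-covariance matrix of g^(j)(Z) and g^(k)(Z) for Z ∼ π. Suppose m_1 < m_2 and Tr(C_{22}) > 0, and let α* = Tr(C_{12}) / Tr(C_{22}). Then for every α ∈ ℝ, Tr(Cov[Ĉ^{α*}_XY, Ĉ^{α*}_XY]) ≤ Tr(Cov[Ĉ^α_XY, Ĉ^α_XY]); that is, α* minimizes the trace of the covariance of the estimator Ĉ^α_XY, and hence minimizes the upper bound ‖c‖₂ Tr(Cov[Ĉ^α_XY, Ĉ^α_XY]) of Lemma 1 on the variance of the model predictions conditioned on the input. -/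
open MeasureTheory
open scoped Matrix

section aux
variable {𝒵 : Type*} [MeasurableSpace 𝒵] (π : Measure 𝒵) [IsProbabilityMeasure π]

lemma map_eval_pi {m : ℕ} (i : Fin m) :
    (Measure.pi fun _ : Fin m => π).map (Function.eval i) = π := by
  refine Measure.ext fun s hs => ?_
  rw [Measure.map_apply (measurable_pi_apply i) hs, Set.eval_preimage, Measure.pi_pi,
    Finset.prod_congr rfl (fun j _ => show π (Function.update (fun _ => Set.univ) i s j)
      = Function.update (fun _ : Fin m => (1 : ENNReal)) i (π s) j by
        simp only [Function.update_apply]; split_ifs <;> simp),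
    Finset.prod_update_of_mem (Finset.mem_univ i)]
  simp

lemma map_pair_pi {m : ℕ} {i k : Fin m} (hik : i ≠ k) :
    (Measure.pi fun _ : Fin m => π).map (fun ω => (ω i, ω k)) = π.prod π := by
  have hmeas : Measurable fun ω : Fin m → 𝒵 => (ω i, ω k) :=
    (measurable_pi_apply i).prodMk (measurable_pi_apply k)
  have : IsProbabilityMeasure ((Measure.pi fun _ : Fin m => π).map fun ω => (ω i, ω k)) :=
    Measure.isProbabilityMeasure_map hmeas.aemeasurable
  refine (Measure.prod_eq fun s t hs ht => ?_).symm
  rw [Measure.map_apply hmeas (hs.prod ht)]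
  have hset : (fun ω : Fin m → 𝒵 => (ω i, ω k)) ⁻¹' (s ×ˢ t)
      = Set.pi Set.univ (Function.update (Function.update (fun _ => Set.univ) i s) k t) := by
    ext ω
    simp only [Set.mem_preimage, Set.mem_prod, Set.mem_pi, Set.mem_univ, forall_true_left,
      Function.update_apply]
    constructor
    · intro h j
      by_cases hjk : j = k
      · subst hjk; simp [h.2]
      · by_cases hji : j = i
        · subst hji; simp [hjk, h.1]
        · simp [hjk, hji]
    · intro h
      constructor
      · have := h i; simpa [hik] using this
      · have := h k; simpa using this
  rw [hset, Measure.pi_pi]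
  have : ∀ j : Fin m, π (Function.update (Function.update (fun _ => Set.univ) i s) k t j)
      = Function.update (Function.update (fun _ : Fin m => (1 : ENNReal)) i (π s)) k (π t) j := by
    intro j
    simp only [Function.update_apply]
    split_ifs <;> simp
  rw [Finset.prod_congr rfl fun j _ => this j,
    Finset.prod_update_of_mem (Finset.mem_univ k),
    Finset.prod_update_of_mem (by simp [hik] : i ∈ Finset.univ \ {k})]
  simp [mul_comm]

lemma integral_eval {m : ℕ} (h : 𝒵 → ℝ) (hm : AEStronglyMeasurable h π) (i : Fin m) :
    ∫ ω, h (ω i) ∂(Measure.pi fun _ : Fin m => π) = ∫ z, h z ∂π := by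
  have h1 : AEStronglyMeasurable h ((Measure.pi fun _ : Fin m => π).map (Function.eval i)) := by
    rw [map_eval_pi]; exact hm
  have := integral_map (μ := Measure.pi fun _ : Fin m => π)
    (measurable_pi_apply i).aemeasurable h1
  rw [map_eval_pi] at this
  exact this.symm

lemma integrable_eval {m : ℕ} {h : 𝒵 → ℝ} (hm : Integrable h π) (i : Fin m) :
    Integrable (fun ω => h (ω i)) (Measure.pi fun _ : Fin m => π) := by
  have h0 := hm
  rw [← map_eval_pi π i] at h0
  exact (integrable_map_measure h0.1 (measurable_pi_apply i).aemeasurable).mp h0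

lemma integral_eval_mul {m : ℕ} {u v : 𝒵 → ℝ} (hu : Measurable u) (hv : Measurable v)
    {i k : Fin m} (hik : i ≠ k) :
    ∫ ω, u (ω i) * v (ω k) ∂(Measure.pi fun _ : Fin m => π)
      = (∫ z, u z ∂π) * ∫ z, v z ∂π := by
  have hmeas : Measurable fun ω : Fin m → 𝒵 => (ω i, ω k) :=
    (measurable_pi_apply i).prodMk (measurable_pi_apply k)
  have h1 : AEStronglyMeasurable (fun p : 𝒵 × 𝒵 => u p.1 * v p.2)
      ((Measure.pi fun _ : Fin m => π).map fun ω => (ω i, ω k)) :=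
    ((hu.comp measurable_fst).mul (hv.comp measurable_snd)).aestronglyMeasurable
  have := integral_map (μ := Measure.pi fun _ : Fin m => π) hmeas.aemeasurable h1
  rw [map_pair_pi π hik, integral_prod_mul] at this
  exact this.symm

lemma integrable_eval_mul {m : ℕ} {u v : 𝒵 → ℝ} (hiu : Integrable u π) (hiv : Integrable v π)
    {i k : Fin m} (hik : i ≠ k) :
    Integrable (fun ω => u (ω i) * v (ω k)) (Measure.pi fun _ : Fin m => π) := by
  have hprod : Integrable (fun p : 𝒵 × 𝒵 => u p.1 * v p.2) (π.prod π) := hiu.mul_prod hiv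
  rw [← map_pair_pi π hik] at hprod
  exact (integrable_map_measure hprod.1
    ((measurable_pi_apply i).prodMk (measurable_pi_apply k)).aemeasurable).mp hprod

lemma l2mul {u v : 𝒵 → ℝ} (hu : MemLp u 2 π) (hv : MemLp v 2 π) :
    Integrable (fun z => u z * v z) π := by
  have h : MemLp (u • v) 1 π := hv.smul hu
  exact memLp_one_iff_integrable.mp h

end aux

section cov
variable {𝒵 : Type*} [MeasurableSpace 𝒵] (π : Measure 𝒵) [IsProbabilityMeasure π]

lemma cov_bilin {u v : 𝒵 → ℝ} (hu : MemLp u 2 π) (hv : MemLp v 2 π) (a c : ℝ) :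
    (∫ z, (a * u z + c * v z) * (a * u z + c * v z) ∂π)
      - (∫ z, a * u z + c * v z ∂π) * (∫ z, a * u z + c * v z ∂π)
    = a^2 * ((∫ z, u z * u z ∂π) - (∫ z, u z ∂π) * (∫ z, u z ∂π))
      + 2*a*c * ((∫ z, u z * v z ∂π) - (∫ z, u z ∂π) * (∫ z, v z ∂π))
      + c^2 * ((∫ z, v z * v z ∂π) - (∫ z, v z ∂π) * (∫ z, v z ∂π)) := by
  have huu := l2mul π hu hu
  have huv := l2mul π hu hv
  have hvv := l2mul π hv hv
  have hiu := hu.integrable one_le_two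
  have hiv := hv.integrable one_le_two
  have e1 : ∀ z, (a * u z + c * v z) * (a * u z + c * v z)
      = a^2 * (u z * u z) + ((2*a*c) * (u z * v z) + c^2 * (v z * v z)) := fun z => by ring
  simp_rw [e1]
  have I1 : Integrable (fun z => a^2 * (u z * u z)) π := huu.const_mul _
  have I2 : Integrable (fun z => 2*a*c * (u z * v z)) π := huv.const_mul _
  have I3 : Integrable (fun z => c^2 * (v z * v z)) π := hvv.const_mul _
  have I23 : Integrable (fun z => 2*a*c * (u z * v z) + c^2 * (v z * v z)) π := I2.add I3
  have I4 : Integrable (fun z => a * u z) π := hiu.const_mul _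
  have I5 : Integrable (fun z => c * v z) π := hiv.const_mul _
  rw [integral_add I1 I23, integral_add I2 I3, integral_add I4 I5,
    integral_const_mul, integral_const_mul, integral_const_mul,
    integral_const_mul, integral_const_mul]
  ring

lemma cov_sum_eval {m : ℕ} (h h' : Fin m → 𝒵 → ℝ)
    (hm : ∀ i, Measurable (h i)) (hm' : ∀ i, Measurable (h' i))
    (hL2 : ∀ i, MemLp (h i) 2 π) (hL2' : ∀ i, MemLp (h' i) 2 π) :
    (∫ ω, (∑ i, h i (ω i)) * (∑ k, h' k (ω k)) ∂(Measure.pi fun _ : Fin m => π))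
      - (∫ ω, (∑ i, h i (ω i)) ∂(Measure.pi fun _ : Fin m => π))
        * (∫ ω, (∑ k, h' k (ω k)) ∂(Measure.pi fun _ : Fin m => π))
    = ∑ i, ((∫ z, h i z * h' i z ∂π) - (∫ z, h i z ∂π) * (∫ z, h' i z ∂π)) := by
  have hint : ∀ i, Integrable (h i) π := fun i => (hL2 i).integrable one_le_two
  have hint' : ∀ i, Integrable (h' i) π := fun i => (hL2' i).integrable one_le_two
  have hterm : ∀ i k : Fin m, Integrable (fun ω : Fin m → 𝒵 => h i (ω i) * h' k (ω k))
      (Measure.pi fun _ : Fin m => π) := by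
    intro i k
    rcases eq_or_ne i k with rfl | hik
    · exact integrable_eval π (l2mul π (hL2 i) (hL2' i)) i
    · exact integrable_eval_mul π (hint i) (hint' k) hik
  have e1 : (∫ ω, (∑ i, h i (ω i)) ∂(Measure.pi fun _ : Fin m => π)) = ∑ i, ∫ z, h i z ∂π := by
    rw [integral_finset_sum _ fun i _ => integrable_eval π (hint i) i]
    exact Finset.sum_congr rfl fun i _ => integral_eval π (h i) (hint i).1 i
  have e1' : (∫ ω, (∑ k, h' k (ω k)) ∂(Measure.pi fun _ : Fin m => π))
      = ∑ k, ∫ z, h' k z ∂π := by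
    rw [integral_finset_sum _ fun i _ => integrable_eval π (hint' i) i]
    exact Finset.sum_congr rfl fun i _ => integral_eval π (h' i) (hint' i).1 i
  have e2 : (∫ ω, (∑ i, h i (ω i)) * (∑ k, h' k (ω k)) ∂(Measure.pi fun _ : Fin m => π))
      = ∑ i, ∑ k, (if i = k then ∫ z, h i z * h' i z ∂π
          else (∫ z, h i z ∂π) * ∫ z, h' k z ∂π) := by
    simp_rw [Finset.sum_mul_sum]
    rw [integral_finset_sum _ fun i _ => integrable_finset_sum _ fun k _ => hterm i k]
    refine Finset.sum_congr rfl fun i _ => ?_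
    rw [integral_finset_sum _ fun k _ => hterm i k]
    refine Finset.sum_congr rfl fun k _ => ?_
    rcases eq_or_ne i k with rfl | hik
    · rw [if_pos rfl]
      exact integral_eval π _ (l2mul π (hL2 i) (hL2' i)).1 i
    · rw [if_neg hik]
      exact integral_eval_mul π (hm i) (hm' k) hik
  rw [e1, e1', e2, Finset.sum_mul_sum, ← Finset.sum_sub_distrib]
  refine Finset.sum_congr rfl fun i _ => ?_
  rw [← Finset.sum_sub_distrib]
  rw [Finset.sum_eq_single_of_mem i (Finset.mem_univ i)
    (fun k _ hk => by rw [if_neg (Ne.symm hk), sub_self])]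
  rw [if_pos rfl]
end cov


/-- coefficient of the high-fidelity part -/
noncomputable def coefA (m1 : ℕ) {m2 : ℕ} (i : Fin m2) : ℝ :=
  if (i : ℕ) < m1 then 1 / (m1 : ℝ) else 0

/-- coefficient of the control-variate part -/
noncomputable def coefD (m1 m2 : ℕ) (i : Fin m2) : ℝ :=
  1 / (m2 : ℝ) - coefA m1 i

section main
variable {𝒵 : Type*} [MeasurableSpace 𝒵] (π : Measure 𝒵) [IsProbabilityMeasure π]

lemma gMF_rep {d : ℕ} (g1 g2 : 𝒵 → Fin d → ℝ) (m1 m2 : ℕ) (β : ℝ)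
    (ω : Fin m2 → 𝒵) (j : Fin d) :
    gMF g1 g2 m1 m2 β ω j
      = ∑ i : Fin m2, (coefA m1 i * g1 (ω i) j + β * coefD m1 m2 i * g2 (ω i) j) := by
  simp only [gMF, coefA, coefD, Finset.sum_filter, Finset.mul_sum, mul_sub,
    ← Finset.sum_sub_distrib, ← Finset.sum_add_distrib]
  refine Finset.sum_congr rfl fun i _ => ?_
  by_cases hi : (i : ℕ) < m1 <;> simp [hi] <;> ring

lemma trace_formula {d : ℕ} (g1 g2 : 𝒵 → Fin d → ℝ)
    (hg1m : ∀ j, Measurable fun z => g1 z j) (hg2m : ∀ j, Measurable fun z => g2 z j)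
    (hg1L2 : ∀ j, MemLp (fun z => g1 z j) 2 π) (hg2L2 : ∀ j, MemLp (fun z => g2 z j) 2 π)
    (m1 m2 : ℕ) (β : ℝ) :
    (covMatrix (Measure.pi fun _ : Fin m2 => π)
        (gMF g1 g2 m1 m2 β) (gMF g1 g2 m1 m2 β)).trace
    = (∑ i : Fin m2, (coefA m1 i)^2) * (covMatrix π g1 g1).trace
      + 2 * β * (∑ i : Fin m2, coefA m1 i * coefD m1 m2 i) * (covMatrix π g1 g2).trace
      + β^2 * (∑ i : Fin m2, (coefD m1 m2 i)^2) * (covMatrix π g2 g2).trace := by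
  have hT11 : (covMatrix π g1 g1).trace
      = ∑ j, ((∫ z, g1 z j * g1 z j ∂π) - (∫ z, g1 z j ∂π) * (∫ z, g1 z j ∂π)) := rfl
  have hT12 : (covMatrix π g1 g2).trace
      = ∑ j, ((∫ z, g1 z j * g2 z j ∂π) - (∫ z, g1 z j ∂π) * (∫ z, g2 z j ∂π)) := rfl
  have hT22 : (covMatrix π g2 g2).trace
      = ∑ j, ((∫ z, g2 z j * g2 z j ∂π) - (∫ z, g2 z j ∂π) * (∫ z, g2 z j ∂π)) := rfl
  have htr : (covMatrix (Measure.pi fun _ : Fin m2 => π)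
        (gMF g1 g2 m1 m2 β) (gMF g1 g2 m1 m2 β)).trace
      = ∑ j, ((∫ ω, gMF g1 g2 m1 m2 β ω j * gMF g1 g2 m1 m2 β ω j
            ∂(Measure.pi fun _ : Fin m2 => π))
        - (∫ ω, gMF g1 g2 m1 m2 β ω j ∂(Measure.pi fun _ : Fin m2 => π))
          * (∫ ω, gMF g1 g2 m1 m2 β ω j ∂(Measure.pi fun _ : Fin m2 => π))) := rfl
  rw [htr, hT11, hT12, hT22]
  have hrw : gMF g1 g2 m1 m2 β = fun ω j => ∑ i : Fin m2,
      (fun i z => coefA m1 i * g1 z j + β * coefD m1 m2 i * g2 z j) i (ω i) :=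
    funext fun ω => funext fun j => gMF_rep g1 g2 m1 m2 β ω j
  rw [hrw]
  have main : ∀ j : Fin d,
      ((∫ ω, (∑ i : Fin m2,
          (fun i z => coefA m1 i * g1 z j + β * coefD m1 m2 i * g2 z j) i (ω i))
          * (∑ i : Fin m2,
          (fun i z => coefA m1 i * g1 z j + β * coefD m1 m2 i * g2 z j) i (ω i))
          ∂(Measure.pi fun _ : Fin m2 => π))
        - (∫ ω, (∑ i : Fin m2,
            (fun i z => coefA m1 i * g1 z j + β * coefD m1 m2 i * g2 z j) i (ω i))
            ∂(Measure.pi fun _ : Fin m2 => π))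
          * (∫ ω, (∑ i : Fin m2,
            (fun i z => coefA m1 i * g1 z j + β * coefD m1 m2 i * g2 z j) i (ω i))
            ∂(Measure.pi fun _ : Fin m2 => π)))
      = ∑ i : Fin m2,
          ((coefA m1 i)^2 * ((∫ z, g1 z j * g1 z j ∂π)
              - (∫ z, g1 z j ∂π) * (∫ z, g1 z j ∂π))
          + 2 * (coefA m1 i) * (β * coefD m1 m2 i) * ((∫ z, g1 z j * g2 z j ∂π)
              - (∫ z, g1 z j ∂π) * (∫ z, g2 z j ∂π))
          + (β * coefD m1 m2 i)^2 * ((∫ z, g2 z j * g2 z j ∂π)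
              - (∫ z, g2 z j ∂π) * (∫ z, g2 z j ∂π))) := by
    intro j
    refine (cov_sum_eval π _ _
      (fun i => (measurable_const.mul (hg1m j)).add (measurable_const.mul (hg2m j)))
      (fun i => (measurable_const.mul (hg1m j)).add (measurable_const.mul (hg2m j)))
      (fun i => ((hg1L2 j).const_mul _).add ((hg2L2 j).const_mul _))
      (fun i => ((hg1L2 j).const_mul _).add ((hg2L2 j).const_mul _))).trans ?_
    exact Finset.sum_congr rfl fun i _ =>
      cov_bilin π (hg1L2 j) (hg2L2 j) (coefA m1 i) (β * coefD m1 m2 i)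
  rw [Finset.sum_congr rfl fun j _ => main j, Finset.sum_comm]
  have step : ∀ i : Fin m2,
      (∑ j, ((coefA m1 i)^2 * ((∫ z, g1 z j * g1 z j ∂π)
              - (∫ z, g1 z j ∂π) * (∫ z, g1 z j ∂π))
          + 2 * (coefA m1 i) * (β * coefD m1 m2 i) * ((∫ z, g1 z j * g2 z j ∂π)
              - (∫ z, g1 z j ∂π) * (∫ z, g2 z j ∂π))
          + (β * coefD m1 m2 i)^2 * ((∫ z, g2 z j * g2 z j ∂π)
              - (∫ z, g2 z j ∂π) * (∫ z, g2 z j ∂π))))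
      = (coefA m1 i)^2 * (∑ j, ((∫ z, g1 z j * g1 z j ∂π)
              - (∫ z, g1 z j ∂π) * (∫ z, g1 z j ∂π)))
        + 2 * β * (coefA m1 i * coefD m1 m2 i) * (∑ j, ((∫ z, g1 z j * g2 z j ∂π)
              - (∫ z, g1 z j ∂π) * (∫ z, g2 z j ∂π)))
        + β^2 * (coefD m1 m2 i)^2 * (∑ j, ((∫ z, g2 z j * g2 z j ∂π)
              - (∫ z, g2 z j ∂π) * (∫ z, g2 z j ∂π))) := by
    intro i
    rw [Finset.sum_add_distrib, Finset.sum_add_distrib, ← Finset.mul_sum, ← Finset.mul_sum,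
      ← Finset.mul_sum]
    ring
  rw [Finset.sum_congr rfl fun i _ => step i, Finset.sum_add_distrib, Finset.sum_add_distrib,
    ← Finset.sum_mul, ← Finset.sum_mul, ← Finset.sum_mul, ← Finset.mul_sum, ← Finset.mul_sum]

end main

/-- Theorem 2: with g⁽ᵏ⁾(z) = x(z) f⁽ᵏ⁾(z), if m₁ < m₂ and Tr(C₂₂) > 0,
then α* = Tr(C₁₂)/Tr(C₂₂) minimizes the trace of the covariance of the multifidelity
estimator Ĉ^α_XY (and hence the Lemma 1 upper bound on the conditional prediction
variance). -/
theorem stmt_10 {𝒵 : Type*} [MeasurableSpace 𝒵] (π : Measure 𝒵) [IsProbabilityMeasure π]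
    {d : ℕ} (x : 𝒵 → Fin d → ℝ) (f1 f2 : 𝒵 → ℝ)
    (hxm : ∀ j, Measurable fun z => x z j) (hf1m : Measurable f1) (hf2m : Measurable f2)
    (hL2₁ : ∀ j, MemLp (fun z => x z j * f1 z) 2 π)
    (hL2₂ : ∀ j, MemLp (fun z => x z j * f2 z) 2 π)
    {m1 m2 : ℕ} (hm1 : 0 < m1) (hm12 : m1 < m2)
    (g1 g2 : 𝒵 → Fin d → ℝ)
    (hg1 : g1 = fun z j => x z j * f1 z) (hg2 : g2 = fun z j => x z j * f2 z)
    (htr : 0 < (covMatrix π g2 g2).trace)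
    (αstar : ℝ) (hαstar : αstar = (covMatrix π g1 g2).trace / (covMatrix π g2 g2).trace) :
    ∀ α : ℝ,
      (covMatrix (Measure.pi fun _ : Fin m2 => π)
          (gMF g1 g2 m1 m2 αstar) (gMF g1 g2 m1 m2 αstar)).trace
        ≤ (covMatrix (Measure.pi fun _ : Fin m2 => π)
            (gMF g1 g2 m1 m2 α) (gMF g1 g2 m1 m2 α)).trace := by
  intro α
  have hg1m : ∀ j, Measurable fun z => g1 z j := by
    intro j; subst hg1; exact (hxm j).mul hf1m
  have hg2m : ∀ j, Measurable fun z => g2 z j := by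
    intro j; subst hg2; exact (hxm j).mul hf2m
  have hg1L2 : ∀ j, MemLp (fun z => g1 z j) 2 π := by
    intro j; subst hg1; exact hL2₁ j
  have hg2L2 : ∀ j, MemLp (fun z => g2 z j) 2 π := by
    intro j; subst hg2; exact hL2₂ j
  have key := trace_formula π g1 g2 hg1m hg2m hg1L2 hg2L2 m1 m2
  rw [key α, key αstar]
  -- numeric facts
  have hm1R : (0:ℝ) < (m1:ℝ) := by exact_mod_cast hm1
  have hm2R : (0:ℝ) < (m2:ℝ) := by exact_mod_cast hm1.trans hm12
  have hm1ne : (m1:ℝ) ≠ 0 := ne_of_gt hm1R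
  have hm2ne : (m2:ℝ) ≠ 0 := ne_of_gt hm2R
  -- sum computations
  have hSAD : (∑ i : Fin m2, coefA m1 i * coefD m1 m2 i) = 1/(m2:ℝ) - 1/(m1:ℝ) := by
    have h0 : (∑ i : Fin m2, coefA m1 i * coefD m1 m2 i)
        = ∑ i ∈ Finset.range m2, ((if i < m1 then 1/(m1:ℝ) else 0)
            * (1/(m2:ℝ) - if i < m1 then 1/(m1:ℝ) else 0)) :=
      Fin.sum_univ_eq_sum_range
        (fun n => (if n < m1 then 1/(m1:ℝ) else 0)
            * (1/(m2:ℝ) - if n < m1 then 1/(m1:ℝ) else 0)) m2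
    rw [h0, ← Finset.sum_range_add_sum_Ico _ (le_of_lt hm12)]
    have e1 : (∑ i ∈ Finset.range m1, ((if i < m1 then 1/(m1:ℝ) else 0)
          * (1/(m2:ℝ) - if i < m1 then 1/(m1:ℝ) else 0)))
        = ∑ _i ∈ Finset.range m1, (1/(m1:ℝ)) * (1/(m2:ℝ) - 1/(m1:ℝ)) :=
      Finset.sum_congr rfl fun i hi => by rw [if_pos (Finset.mem_range.mp hi)]
    have e2 : (∑ i ∈ Finset.Ico m1 m2, ((if i < m1 then 1/(m1:ℝ) else 0)
          * (1/(m2:ℝ) - if i < m1 then 1/(m1:ℝ) else 0))) = 0 :=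
      Finset.sum_eq_zero fun i hi => by
        rw [if_neg (by simpa using (Finset.mem_Ico.mp hi).1), zero_mul]
    rw [e1, e2, Finset.sum_const, Finset.card_range, nsmul_eq_mul, add_zero]
    field_simp
  have hSDD : (∑ i : Fin m2, (coefD m1 m2 i)^2) = 1/(m1:ℝ) - 1/(m2:ℝ) := by
    have h0 : (∑ i : Fin m2, (coefD m1 m2 i)^2)
        = ∑ i ∈ Finset.range m2, (1/(m2:ℝ) - if i < m1 then 1/(m1:ℝ) else 0)^2 :=
      Fin.sum_univ_eq_sum_range
        (fun n => (1/(m2:ℝ) - if n < m1 then 1/(m1:ℝ) else 0)^2) m2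
    rw [h0, ← Finset.sum_range_add_sum_Ico _ (le_of_lt hm12)]
    have e1 : (∑ i ∈ Finset.range m1, (1/(m2:ℝ) - if i < m1 then 1/(m1:ℝ) else 0)^2)
        = ∑ _i ∈ Finset.range m1, (1/(m2:ℝ) - 1/(m1:ℝ))^2 :=
      Finset.sum_congr rfl fun i hi => by rw [if_pos (Finset.mem_range.mp hi)]
    have e2 : (∑ i ∈ Finset.Ico m1 m2, (1/(m2:ℝ) - if i < m1 then 1/(m1:ℝ) else 0)^2)
        = ∑ _i ∈ Finset.Ico m1 m2, (1/(m2:ℝ) - 0)^2 :=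
      Finset.sum_congr rfl fun i hi => by
        rw [if_neg (by simpa using (Finset.mem_Ico.mp hi).1)]
    rw [e1, e2, Finset.sum_const, Finset.sum_const, Finset.card_range, Nat.card_Ico]
    have hcast : ((m2 - m1 : ℕ) : ℝ) = (m2:ℝ) - (m1:ℝ) := by
      exact_mod_cast Nat.cast_sub (le_of_lt hm12)
    rw [nsmul_eq_mul, nsmul_eq_mul, hcast]
    field_simp
    ring
  rw [hSAD, hSDD]
  have hκ : (0:ℝ) < 1/(m1:ℝ) - 1/(m2:ℝ) := by
    rw [sub_pos]
    apply one_div_lt_one_div_of_lt hm1R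
    exact_mod_cast hm12
  have hT22ne : (covMatrix π g2 g2).trace ≠ 0 := ne_of_gt htr
  have hT12eq : (covMatrix π g1 g2).trace = αstar * (covMatrix π g2 g2).trace := by
    rw [hαstar]; field_simp
  rw [hT12eq]
  have hsq := sq_nonneg (α - αstar)
  nlinarith [mul_nonneg (mul_nonneg hκ.le htr.le) (sq_nonneg (α - αstar))]
end

section
/- (Lemma 4, covariance formula) For every matrix A ∈ ℝ^{d'×d'}, the autocovariance of the matrix-coefficient vector-valued multifidelity estimator is Cov[ĝ^A_MF, ĝ^A_MF] = (1/m_1) C_{11} + (1/m_1 − 1/m_2)(A C_{22} Aᵀ − C_{12} Aᵀ − A C_{21}). -/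
open MeasureTheory
open scoped Matrix
open scoped ENNReal

/-! ### Auxiliary machinery -/

/-- Scalar covariance of two real random variables. -/
noncomputable def covf {Ω : Type*} [MeasurableSpace Ω] (P : Measure Ω) (V W : Ω → ℝ) : ℝ :=
  (∫ ω, V ω * W ω ∂P) - (∫ ω, V ω ∂P) * (∫ ω, W ω ∂P)

section CovfStruct
variable {Ω : Type*} [MeasurableSpace Ω] {P : Measure Ω}

lemma covf_sum_sum {ι κ : Type*} (s : Finset ι) (t : Finset κ)
    (V : ι → Ω → ℝ) (W : κ → Ω → ℝ)
    (hV : ∀ p ∈ s, Integrable (V p) P) (hW : ∀ q ∈ t, Integrable (W q) P)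
    (hVW : ∀ p ∈ s, ∀ q ∈ t, Integrable (fun ω => V p ω * W q ω) P) :
    covf P (fun ω => ∑ p ∈ s, V p ω) (fun ω => ∑ q ∈ t, W q ω)
      = ∑ p ∈ s, ∑ q ∈ t, covf P (V p) (W q) := by
  unfold covf
  simp_rw [Finset.sum_mul_sum]
  rw [integral_finset_sum s (fun p hp => integrable_finset_sum t fun q hq => hVW p hp q hq),
    Finset.sum_congr rfl fun p hp => integral_finset_sum t fun q hq => hVW p hp q hq,
    integral_finset_sum s hV, integral_finset_sum t hW, Finset.sum_mul_sum,
    ← Finset.sum_sub_distrib]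
  exact Finset.sum_congr rfl fun p _ => (Finset.sum_sub_distrib _ _).symm

end CovfStruct

section Helpers
variable {𝒵 : Type*} [MeasurableSpace 𝒵] {π : Measure 𝒵} [IsProbabilityMeasure π] {m : ℕ}
variable {f h : 𝒵 → ℝ}

lemma mf_memL2_integrable (hf : MemLp f 2 π) : Integrable f π :=
  hf.integrable (by norm_num)

lemma mf_memL2_mul_integrable (hf : MemLp f 2 π) (hh : MemLp h 2 π) :
    Integrable (fun z => f z * h z) π := by
  have h2 : (1 : ℝ≥0∞) / 1 = 1 / 2 + 1 / 2 := by
    rw [ENNReal.div_add_div_same, one_add_one_eq_two,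
      ENNReal.div_self (by norm_num) (by norm_num)]
    exact (ENNReal.div_self (by norm_num) (by norm_num)).symm
  have := hh.smul (r := 1) hf
  rw [← memLp_one_iff_integrable]
  exact this

lemma mf_integrable_eval (hf : Integrable f π) (a : Fin m) :
    Integrable (fun ω : Fin m → 𝒵 => f (ω a)) (Measure.pi fun _ => π) := by
  letI : MeasureSpace 𝒵 := ⟨π⟩
  haveI : SigmaFinite (volume : Measure 𝒵) := inferInstanceAs (SigmaFinite π)
  have h := Integrable.fintype_prod (f := fun (i : Fin m) (z : 𝒵) => if i = a then f z else 1) (μ := fun _ => π)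
    (fun i => by split_ifs; exacts [hf, integrable_const 1])
  simpa [Finset.prod_ite_eq'] using h

lemma mf_integral_eval (f : 𝒵 → ℝ) (a : Fin m) :
    ∫ ω, f (ω a) ∂(Measure.pi fun _ : Fin m => π) = ∫ z, f z ∂π := by
  letI : MeasureSpace 𝒵 := ⟨π⟩
  haveI : SigmaFinite (volume : Measure 𝒵) := inferInstanceAs (SigmaFinite π)
  have h := integral_fintype_prod_eq_prod (fun (i : Fin m) (z : 𝒵) => if i = a then f z else 1)
    (μ := fun _ => volume)
  simp only [Finset.prod_ite_eq', Finset.mem_univ, if_true] at h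
  have h2 : ∀ i : Fin m,
      (∫ z : 𝒵, (if i = a then f z else 1)) = if i = a then ∫ z, f z ∂π else 1 :=
    fun i => by
      split_ifs <;> rw [show (volume : Measure 𝒵) = π from rfl] <;> simp
  rw [Finset.prod_congr rfl (fun i _ => h2 i), Finset.prod_ite_eq',
    if_pos (Finset.mem_univ a)] at h
  exact h

lemma mf_prod_pair_eq (a b : Fin m) (x : Fin m → 𝒵) :
    (∏ i, (if i = a then f (x i) else 1) * (if i = b then h (x i) else 1))
      = f (x a) * h (x b) := by
  rw [Finset.prod_mul_distrib, Finset.prod_ite_eq', Finset.prod_ite_eq',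
    if_pos (Finset.mem_univ a), if_pos (Finset.mem_univ b)]

lemma mf_integrable_pair (hf : MemLp f 2 π) (hh : MemLp h 2 π) (a b : Fin m) :
    Integrable (fun ω : Fin m → 𝒵 => f (ω a) * h (ω b)) (Measure.pi fun _ => π) := by
  rcases eq_or_ne a b with rfl | hab
  · exact mf_integrable_eval (mf_memL2_mul_integrable hf hh) a
  · letI : MeasureSpace 𝒵 := ⟨π⟩
    haveI : SigmaFinite (volume : Measure 𝒵) := inferInstanceAs (SigmaFinite π)
    have hfi := mf_memL2_integrable hf
    have hhi := mf_memL2_integrable hh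
    have hint := Integrable.fintype_prod
      (f := fun (i : Fin m) (z : 𝒵) => (if i = a then f z else 1) * (if i = b then h z else 1))
      (μ := fun _ => π)
      (fun i => by
        rcases eq_or_ne i a with rfl | hia
        · simp only [if_pos rfl, if_neg hab, mul_one]; exact hfi
        · rcases eq_or_ne i b with rfl | hib
          · simp only [if_neg hia, if_pos rfl, one_mul]; exact hhi
          · simp only [if_neg hia, if_neg hib, one_mul]; exact integrable_const 1)
    rw [show (fun x : Fin m → 𝒵 =>
        ∏ i, (if i = a then f (x i) else 1) * (if i = b then h (x i) else 1))
        = fun x => f (x a) * h (x b) from funext (mf_prod_pair_eq a b)] at hint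
    exact hint

lemma mf_integral_pair (hf : MemLp f 2 π) (hh : MemLp h 2 π) (a b : Fin m) :
    ∫ ω, f (ω a) * h (ω b) ∂(Measure.pi fun _ : Fin m => π)
      = if a = b then ∫ z, f z * h z ∂π else (∫ z, f z ∂π) * ∫ z, h z ∂π := by
  rcases eq_or_ne a b with rfl | hab
  · rw [if_pos rfl]
    exact mf_integral_eval (fun z => f z * h z) a
  · rw [if_neg hab]
    letI : MeasureSpace 𝒵 := ⟨π⟩
    haveI : SigmaFinite (volume : Measure 𝒵) := inferInstanceAs (SigmaFinite π)
    have hint := integral_fintype_prod_eq_prod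
      (fun (i : Fin m) (z : 𝒵) => (if i = a then f z else 1) * (if i = b then h z else 1))
      (μ := fun _ => volume)
    have h2 : ∀ i : Fin m,
        (∫ z : 𝒵, (if i = a then f z else 1) * (if i = b then h z else 1))
          = (if i = a then ∫ z, f z ∂π else 1) * (if i = b then ∫ z, h z ∂π else 1) := by
      intro i
      rcases eq_or_ne i a with rfl | hia
      · simp only [if_pos rfl, if_neg hab, mul_one]; rfl
      · rcases eq_or_ne i b with rfl | hib
        · simp only [if_neg hia, if_pos rfl, one_mul]; rfl
        · simp only [if_neg hia, if_neg hib, one_mul]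
          rw [show (volume : Measure 𝒵) = π from rfl]; simp
    rw [show (fun x : Fin m → 𝒵 =>
        ∏ i, (if i = a then f (x i) else 1) * (if i = b then h (x i) else 1))
        = fun x => f (x a) * h (x b) from funext (mf_prod_pair_eq a b),
      Finset.prod_congr rfl (fun i _ => h2 i), Finset.prod_mul_distrib,
      Finset.prod_ite_eq', Finset.prod_ite_eq',
      if_pos (Finset.mem_univ a), if_pos (Finset.mem_univ b)] at hint
    exact hint

lemma mf_integrable_csum (hf : MemLp f 2 π) (c : ℝ) (S : Finset (Fin m)) :
    Integrable (fun ω : Fin m → 𝒵 => c * ∑ a ∈ S, f (ω a)) (Measure.pi fun _ => π) :=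
  (integrable_finset_sum S fun a _ => mf_integrable_eval (mf_memL2_integrable hf) a).const_mul c

lemma mf_csum_mul_csum (c c' : ℝ) (S T : Finset (Fin m)) (ω : Fin m → 𝒵) :
    (c * ∑ a ∈ S, f (ω a)) * (c' * ∑ b ∈ T, h (ω b))
      = c * c' * ∑ a ∈ S, ∑ b ∈ T, f (ω a) * h (ω b) := by
  rw [← Finset.sum_mul_sum]
  ring

lemma mf_integrable_csum_mul (hf : MemLp f 2 π) (hh : MemLp h 2 π) (c c' : ℝ)
    (S T : Finset (Fin m)) :
    Integrable (fun ω : Fin m → 𝒵 =>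
      (c * ∑ a ∈ S, f (ω a)) * (c' * ∑ b ∈ T, h (ω b))) (Measure.pi fun _ => π) := by
  rw [show (fun ω : Fin m → 𝒵 => (c * ∑ a ∈ S, f (ω a)) * (c' * ∑ b ∈ T, h (ω b)))
      = fun ω => c * c' * ∑ a ∈ S, ∑ b ∈ T, f (ω a) * h (ω b) from
    funext (mf_csum_mul_csum c c' S T)]
  exact (integrable_finset_sum S fun a _ =>
    integrable_finset_sum T fun b _ => mf_integrable_pair hf hh a b).const_mul _

lemma covf_mf_csum (hf : MemLp f 2 π) (hh : MemLp h 2 π) (c c' : ℝ) (S T : Finset (Fin m)) :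
    covf (Measure.pi fun _ : Fin m => π)
        (fun ω => c * ∑ a ∈ S, f (ω a)) (fun ω => c' * ∑ b ∈ T, h (ω b))
      = c * c' * ((S ∩ T).card : ℝ) * covf π f h := by
  classical
  set P := Measure.pi fun _ : Fin m => π with hP
  set I1 := ∫ z, f z * h z ∂π
  set If := ∫ z, f z ∂π
  set Ih := ∫ z, h z ∂π
  have key : (∫ ω, (c * ∑ a ∈ S, f (ω a)) * (c' * ∑ b ∈ T, h (ω b)) ∂P)
      = c * c' * (((S ∩ T).card : ℝ) * I1
          + ((S.card : ℝ) * (T.card : ℝ) - ((S ∩ T).card : ℝ)) * (If * Ih)) := by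
    rw [show (fun ω : Fin m → 𝒵 => (c * ∑ a ∈ S, f (ω a)) * (c' * ∑ b ∈ T, h (ω b)))
        = fun ω => c * c' * ∑ a ∈ S, ∑ b ∈ T, f (ω a) * h (ω b) from
      funext (mf_csum_mul_csum c c' S T), integral_const_mul]
    rw [integral_finset_sum S fun a _ =>
      integrable_finset_sum T fun b _ => mf_integrable_pair hf hh a b]
    rw [Finset.sum_congr rfl fun a _ =>
      integral_finset_sum T fun b _ => mf_integrable_pair hf hh a b]
    rw [Finset.sum_congr rfl fun a _ => Finset.sum_congr rfl fun b _ => mf_integral_pair hf hh a b]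
    congr 1
    have step : ∀ a : Fin m, ∑ b ∈ T, (if a = b then I1 else If * Ih)
        = (T.card : ℝ) * (If * Ih) + (if a ∈ T then I1 - If * Ih else 0) := by
      intro a
      rw [Finset.sum_congr rfl (fun b _ => show (if a = b then I1 else If * Ih)
          = If * Ih + (if a = b then I1 - If * Ih else 0) from by split_ifs <;> ring)]
      rw [Finset.sum_add_distrib, Finset.sum_const, Finset.sum_ite_eq, nsmul_eq_mul]
    rw [Finset.sum_congr rfl fun a _ => step a, Finset.sum_add_distrib, Finset.sum_const,
      nsmul_eq_mul, Finset.sum_ite_mem, Finset.sum_const, nsmul_eq_mul]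
    ring
  have mf : (∫ ω, (c * ∑ a ∈ S, f (ω a)) ∂P) = c * ((S.card : ℝ) * If) := by
    rw [integral_const_mul,
      integral_finset_sum S fun a _ => mf_integrable_eval (mf_memL2_integrable hf) a,
      Finset.sum_congr rfl fun a _ => mf_integral_eval f a, Finset.sum_const, nsmul_eq_mul]
  have mh : (∫ ω, (c' * ∑ b ∈ T, h (ω b)) ∂P) = c' * ((T.card : ℝ) * Ih) := by
    rw [integral_const_mul,
      integral_finset_sum T fun b _ => mf_integrable_eval (mf_memL2_integrable hh) b,
      Finset.sum_congr rfl fun b _ => mf_integral_eval h b, Finset.sum_const, nsmul_eq_mul]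
  rw [covf, key, mf, mh, covf]
  ring

end Helpers

/-! ### Atom indexing for the multifidelity estimator -/

noncomputable def mfC {d' : ℕ} (A : Matrix (Fin d') (Fin d') ℝ) (m1 m2 : ℕ) (i : Fin d') :
    Unit ⊕ (Fin d' ⊕ Fin d') → ℝ
  | .inl _ => 1 / (m1 : ℝ)
  | .inr (.inl k) => A i k * (1 / (m2 : ℝ))
  | .inr (.inr k) => -(A i k * (1 / (m1 : ℝ)))

def mfS {m2 : ℕ} (S : Finset (Fin m2)) (d' : ℕ) : Unit ⊕ (Fin d' ⊕ Fin d') → Finset (Fin m2)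
  | .inl _ => S
  | .inr (.inl _) => Finset.univ
  | .inr (.inr _) => S

def mfF {𝒵 : Type*} {d' : ℕ} (g1 g2 : 𝒵 → Fin d' → ℝ) (i : Fin d') :
    Unit ⊕ (Fin d' ⊕ Fin d') → 𝒵 → ℝ
  | .inl _ => fun z => g1 z i
  | .inr (.inl k) => fun z => g2 z k
  | .inr (.inr k) => fun z => g2 z k

set_option maxHeartbeats 1000000 in
/-- Lemma 4, covariance formula: for every matrix A ∈ ℝ^{d'×d'},
Cov[ĝ^A_MF, ĝ^A_MF] = (1/m₁) C₁₁ + (1/m₁ − 1/m₂)(A C₂₂ Aᵀ − C₁₂ Aᵀ − A C₂₁). -/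
theorem stmt_11 {𝒵 : Type*} [MeasurableSpace 𝒵] (π : Measure 𝒵) [IsProbabilityMeasure π]
    {d' : ℕ} (g1 g2 : 𝒵 → Fin d' → ℝ)
    (hg1m : ∀ j, Measurable fun z => g1 z j) (hg2m : ∀ j, Measurable fun z => g2 z j)
    (hg1L2 : ∀ j, MemLp (fun z => g1 z j) 2 π) (hg2L2 : ∀ j, MemLp (fun z => g2 z j) 2 π)
    {m1 m2 : ℕ} (hm1 : 0 < m1) (hm12 : m1 ≤ m2) :
    ∀ A : Matrix (Fin d') (Fin d') ℝ,
      covMatrix (Measure.pi fun _ : Fin m2 => π) (gMFA g1 g2 m1 m2 A) (gMFA g1 g2 m1 m2 A)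
        = (1 / (m1 : ℝ)) • covMatrix π g1 g1
          + ((1 / (m1 : ℝ)) - 1 / (m2 : ℝ)) •
            (A * covMatrix π g2 g2 * Aᵀ - covMatrix π g1 g2 * Aᵀ - A * covMatrix π g2 g1) := by
  classical
  intro A
  have hm2 : 0 < m2 := lt_of_lt_of_le hm1 hm12
  have hm1R : ((m1 : ℝ)) ≠ 0 := Nat.cast_ne_zero.mpr hm1.ne'
  have hm2R : ((m2 : ℝ)) ≠ 0 := Nat.cast_ne_zero.mpr hm2.ne'
  set S : Finset (Fin m2) := Finset.univ.filter (fun i : Fin m2 => (i : ℕ) < m1) with hSdef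
  have hScard : ((S.card : ℝ)) = (m1 : ℝ) := by
    have hmap : S = Finset.map ⟨Fin.castLE hm12, Fin.castLE_injective hm12⟩ Finset.univ := by
      ext x
      simp only [hSdef, Finset.mem_filter, Finset.mem_univ, true_and, Finset.mem_map,
        Function.Embedding.coeFn_mk]
      constructor
      · intro hx
        exact ⟨⟨(x : ℕ), hx⟩, by ext; rfl⟩
      · rintro ⟨j, rfl⟩
        exact j.isLt
    rw [hmap, Finset.card_map, Finset.card_univ, Fintype.card_fin]
  have hFL2 : ∀ (i : Fin d') p, MemLp (mfF g1 g2 i p) 2 π := by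
    rintro i (u | k | k)
    exacts [hg1L2 i, hg2L2 k, hg2L2 k]
  have hrep : ∀ i : Fin d', (fun ω => gMFA g1 g2 m1 m2 A ω i)
      = fun ω : Fin m2 → 𝒵 => ∑ p : Unit ⊕ (Fin d' ⊕ Fin d'),
          mfC A m1 m2 i p * ∑ a ∈ mfS S d' p, mfF g1 g2 i p (ω a) := by
    intro i; funext ω
    simp only [Fintype.sum_sum_type, Finset.univ_unique, Finset.sum_singleton]
    simp only [mfC, mfS, mfF, gMFA, Pi.add_apply, Matrix.mulVec, dotProduct, Pi.sub_apply]
    rw [← hSdef, ← Finset.sum_add_distrib]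
    congr 1
    exact Finset.sum_congr rfl fun k _ => by ring
  have hentry : ∀ i j : Fin d',
      covMatrix (Measure.pi fun _ : Fin m2 => π) (gMFA g1 g2 m1 m2 A) (gMFA g1 g2 m1 m2 A) i j
        = ∑ p : Unit ⊕ (Fin d' ⊕ Fin d'), ∑ q : Unit ⊕ (Fin d' ⊕ Fin d'),
            mfC A m1 m2 i p * mfC A m1 m2 j q * (((mfS S d' p ∩ mfS S d' q).card : ℝ))
              * covf π (mfF g1 g2 i p) (mfF g1 g2 j q) := by
    intro i j
    have h0 : covMatrix (Measure.pi fun _ : Fin m2 => π)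
          (gMFA g1 g2 m1 m2 A) (gMFA g1 g2 m1 m2 A) i j
        = covf (Measure.pi fun _ : Fin m2 => π)
            (fun ω => gMFA g1 g2 m1 m2 A ω i) (fun ω => gMFA g1 g2 m1 m2 A ω j) := rfl
    rw [h0, hrep i, hrep j]
    have hc := covf_sum_sum (P := Measure.pi fun _ : Fin m2 => π) Finset.univ Finset.univ
        (fun p ω => mfC A m1 m2 i p * ∑ a ∈ mfS S d' p, mfF g1 g2 i p (ω a))
        (fun q ω => mfC A m1 m2 j q * ∑ a ∈ mfS S d' q, mfF g1 g2 j q (ω a))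
        (fun p _ => mf_integrable_csum (hFL2 i p) _ _)
        (fun q _ => mf_integrable_csum (hFL2 j q) _ _)
        (fun p _ q _ => mf_integrable_csum_mul (hFL2 i p) (hFL2 j q) _ _ _ _)
    rw [hc]
    exact Finset.sum_congr rfl fun p _ => Finset.sum_congr rfl fun q _ =>
      covf_mf_csum (hFL2 i p) (hFL2 j q) _ _ _ _
  ext i j
  rw [hentry i j]
  simp only [Fintype.sum_sum_type, Finset.univ_unique, Finset.sum_singleton, mfC, mfS, mfF,
    Finset.inter_self, Finset.inter_univ, Finset.univ_inter, Finset.card_univ, Fintype.card_fin,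
    hScard]
  have hcm : ∀ (u v : 𝒵 → Fin d' → ℝ) (a b : Fin d'),
      covMatrix π u v a b = covf π (fun z => u z a) (fun z => v z b) := fun _ _ _ _ => rfl
  simp only [Matrix.add_apply, Matrix.smul_apply, Matrix.sub_apply, Matrix.mul_apply,
    Matrix.transpose_apply, smul_eq_mul, hcm, Finset.sum_add_distrib]
  have e0 : 1/(m1:ℝ) * (1/(m1:ℝ)) * (m1:ℝ) * covf π (fun z => g1 z i) (fun z => g1 z j)
      = (1/(m1:ℝ)) * covf π (fun z => g1 z i) (fun z => g1 z j) := by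
    field_simp
  have e1 : (∑ x : Fin d',
        1/(m1:ℝ) * (A j x * (1/(m2:ℝ))) * (m1:ℝ) * covf π (fun z => g1 z i) (fun z => g2 z x))
      = (1/(m2:ℝ)) * ∑ x : Fin d', A j x * covf π (fun z => g1 z i) (fun z => g2 z x) := by
    rw [Finset.mul_sum]
    refine Finset.sum_congr rfl fun x _ => ?_
    field_simp
  have e2 : (∑ x : Fin d',
        1/(m1:ℝ) * -(A j x * (1/(m1:ℝ))) * (m1:ℝ) * covf π (fun z => g1 z i) (fun z => g2 z x))
      = (-(1/(m1:ℝ))) * ∑ x : Fin d', A j x * covf π (fun z => g1 z i) (fun z => g2 z x) := by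
    rw [Finset.mul_sum]
    refine Finset.sum_congr rfl fun x _ => ?_
    field_simp
  have e3 : (∑ x : Fin d',
        A i x * (1/(m2:ℝ)) * (1/(m1:ℝ)) * (m1:ℝ) * covf π (fun z => g2 z x) (fun z => g1 z j))
      = (1/(m2:ℝ)) * ∑ x : Fin d', A i x * covf π (fun z => g2 z x) (fun z => g1 z j) := by
    rw [Finset.mul_sum]
    refine Finset.sum_congr rfl fun x _ => ?_
    field_simp
  have e4 : (∑ x : Fin d',
        -(A i x * (1/(m1:ℝ))) * (1/(m1:ℝ)) * (m1:ℝ) * covf π (fun z => g2 z x) (fun z => g1 z j))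
      = (-(1/(m1:ℝ))) * ∑ x : Fin d', A i x * covf π (fun z => g2 z x) (fun z => g1 z j) := by
    rw [Finset.mul_sum]
    refine Finset.sum_congr rfl fun x _ => ?_
    field_simp
  have d11 : (∑ x : Fin d', ∑ y : Fin d',
        A i x * (1/(m2:ℝ)) * (A j y * (1/(m2:ℝ))) * (m2:ℝ) * covf π (fun z => g2 z x) (fun z => g2 z y))
      = (1/(m2:ℝ)) * ∑ x : Fin d', ∑ y : Fin d',
          A i x * A j y * covf π (fun z => g2 z x) (fun z => g2 z y) := by
    rw [Finset.mul_sum]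
    refine Finset.sum_congr rfl fun x _ => ?_
    rw [Finset.mul_sum]
    refine Finset.sum_congr rfl fun y _ => ?_
    field_simp
  have d12 : (∑ x : Fin d', ∑ y : Fin d',
        A i x * (1/(m2:ℝ)) * -(A j y * (1/(m1:ℝ))) * (m1:ℝ) * covf π (fun z => g2 z x) (fun z => g2 z y))
      = (-(1/(m2:ℝ))) * ∑ x : Fin d', ∑ y : Fin d',
          A i x * A j y * covf π (fun z => g2 z x) (fun z => g2 z y) := by
    rw [Finset.mul_sum]
    refine Finset.sum_congr rfl fun x _ => ?_
    rw [Finset.mul_sum]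
    refine Finset.sum_congr rfl fun y _ => ?_
    field_simp
  have d21 : (∑ x : Fin d', ∑ y : Fin d',
        -(A i x * (1/(m1:ℝ))) * (A j y * (1/(m2:ℝ))) * (m1:ℝ) * covf π (fun z => g2 z x) (fun z => g2 z y))
      = (-(1/(m2:ℝ))) * ∑ x : Fin d', ∑ y : Fin d',
          A i x * A j y * covf π (fun z => g2 z x) (fun z => g2 z y) := by
    rw [Finset.mul_sum]
    refine Finset.sum_congr rfl fun x _ => ?_
    rw [Finset.mul_sum]
    refine Finset.sum_congr rfl fun y _ => ?_
    field_simp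
  have d22 : (∑ x : Fin d', ∑ y : Fin d',
        -(A i x * (1/(m1:ℝ))) * -(A j y * (1/(m1:ℝ))) * (m1:ℝ) * covf π (fun z => g2 z x) (fun z => g2 z y))
      = (1/(m1:ℝ)) * ∑ x : Fin d', ∑ y : Fin d',
          A i x * A j y * covf π (fun z => g2 z x) (fun z => g2 z y) := by
    rw [Finset.mul_sum]
    refine Finset.sum_congr rfl fun x _ => ?_
    rw [Finset.mul_sum]
    refine Finset.sum_congr rfl fun y _ => ?_
    field_simp
  have hR1 : (∑ x : Fin d',
        (∑ k : Fin d', A i k * covf π (fun z => g2 z k) (fun z => g2 z x)) * A j x)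
      = ∑ x : Fin d', ∑ y : Fin d',
          A i x * A j y * covf π (fun z => g2 z x) (fun z => g2 z y) := by
    simp_rw [Finset.sum_mul]
    rw [Finset.sum_comm]
    exact Finset.sum_congr rfl fun x _ => Finset.sum_congr rfl fun y _ => by ring
  have hR2 : (∑ x : Fin d', covf π (fun z => g1 z i) (fun z => g2 z x) * A j x)
      = ∑ x : Fin d', A j x * covf π (fun z => g1 z i) (fun z => g2 z x) :=
    Finset.sum_congr rfl fun x _ => by ring
  rw [e0, e1, e2, e3, e4, d11, d12, d21, d22, hR1, hR2]
  ring
end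

section
/- (Loewner minimality of the optimal matrix coefficient) Suppose C_{22} is invertible and let A* = C_{12} C_{22}^{-1}. Then for every matrix A ∈ ℝ^{d'×d'}, the difference Cov[ĝ^A_MF, ĝ^A_MF] − Cov[ĝ^{A*}_MF, ĝ^{A*}_MF] is a symmetric positive semidefinite matrix. -/
open MeasureTheory
open scoped Matrix

noncomputable def bfmcC1 (m1 : ℕ) {m2 : ℕ} (i : Fin m2) : ℝ :=
  if (i : ℕ) < m1 then 1 / (m1 : ℝ) else 0

noncomputable def bfmcC2 (m1 : ℕ) {m2 : ℕ} (i : Fin m2) : ℝ :=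
  1 / (m2 : ℝ) - bfmcC1 m1 i

noncomputable def bfmcH {𝒵 : Type*} {d : ℕ} (g1 g2 : 𝒵 → Fin d → ℝ) (m1 : ℕ) {m2 : ℕ}
    (A : Matrix (Fin d) (Fin d) ℝ) (a : Fin d) (i : Fin m2) (z : 𝒵) : ℝ :=
  bfmcC1 m1 i * g1 z a + ∑ b, (A a b * bfmcC2 m1 i) * g2 z b


section helpers
variable {𝒵 : Type*} [MeasurableSpace 𝒵] {π : Measure 𝒵} [IsProbabilityMeasure π]

lemma integrable_mul_memL2 {f g : 𝒵 → ℝ} (hf : MemLp f 2 π) (hg : MemLp g 2 π) :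
    Integrable (fun z => f z * g z) π := by
  have h : MemLp (f • g) 1 π := MemLp.smul (r := 1) hg hf
  exact memLp_one_iff_integrable.mp h

variable {m : ℕ}

lemma pi_prod_integrable (F : Fin m → 𝒵 → ℝ) (hF : ∀ l, Integrable (F l) π) :
    Integrable (fun ω : Fin m → 𝒵 => ∏ l, F l (ω l)) (Measure.pi fun _ => π) := by
  letI : MeasureSpace 𝒵 := { volume := π }
  haveI : SigmaFinite (volume : Measure 𝒵) := by show SigmaFinite π; infer_instance
  exact Integrable.fintype_prod (f := F) hF

lemma pi_prod_integral (F : Fin m → 𝒵 → ℝ) (hF : ∀ l, Integrable (F l) π) :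
    ∫ ω, ∏ l, F l (ω l) ∂(Measure.pi fun _ : Fin m => π) = ∏ l, ∫ z, F l z ∂π := by
  letI : MeasureSpace 𝒵 := { volume := π }
  haveI : SigmaFinite (volume : Measure 𝒵) := by show SigmaFinite π; infer_instance
  exact MeasureTheory.integral_fintype_prod_eq_prod F

lemma integrable_comp_eval (i : Fin m) {f : 𝒵 → ℝ} (hf : Integrable f π) :
    Integrable (fun ω : Fin m → 𝒵 => f (ω i)) (Measure.pi fun _ => π) := by
  have h : (fun ω : Fin m → 𝒵 => f (ω i))
      = fun ω : Fin m → 𝒵 => ∏ l, (if l = i then f (ω l) else 1) := by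
    funext ω
    simp [Finset.prod_ite_eq' Finset.univ i (fun l => f (ω l))]
  rw [h]
  exact pi_prod_integrable (fun l z => if l = i then f z else 1)
    (fun l => by by_cases hl : l = i <;> simp [hl, hf])

lemma integral_comp_eval (i : Fin m) {f : 𝒵 → ℝ} (hf : Integrable f π) :
    ∫ ω, f (ω i) ∂(Measure.pi fun _ : Fin m => π) = ∫ z, f z ∂π := by
  have h : (fun ω : Fin m → 𝒵 => f (ω i))
      = fun ω : Fin m → 𝒵 => ∏ l, (if l = i then f (ω l) else 1) := by
    funext ω
    simp [Finset.prod_ite_eq' Finset.univ i (fun l => f (ω l))]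
  rw [show (∫ ω, f (ω i) ∂(Measure.pi fun _ : Fin m => π))
      = ∫ ω, ∏ l, (if l = i then f (ω l) else 1) ∂(Measure.pi fun _ : Fin m => π) from by rw [← h],
    pi_prod_integral (fun l z => if l = i then f z else 1)
      (fun l => by by_cases hl : l = i <;> simp [hl, hf])]
  have h2 : ∀ l : Fin m, (∫ z, if l = i then f z else 1 ∂π) = if l = i then ∫ z, f z ∂π else 1 := by
    intro l; split_ifs <;> simp
  rw [Finset.prod_congr rfl (fun l _ => h2 l)]
  simp [Finset.prod_ite_eq' Finset.univ i (fun _ => ∫ z, f z ∂π)]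

lemma integral_eval_mul_eval (i k : Fin m) {f g : 𝒵 → ℝ}
    (hf : MemLp f 2 π) (hg : MemLp g 2 π) :
    ∫ ω, f (ω i) * g (ω k) ∂(Measure.pi fun _ : Fin m => π)
      = if i = k then ∫ z, f z * g z ∂π else (∫ z, f z ∂π) * ∫ z, g z ∂π := by
  by_cases hik : i = k
  · subst hik
    simp only [if_pos rfl]
    exact integral_comp_eval i (integrable_mul_memL2 hf hg)
  · rw [if_neg hik]
    have h : (fun ω : Fin m → 𝒵 => f (ω i) * g (ω k))
        = fun ω : Fin m → 𝒵 => ∏ l, ((if l = i then f (ω l) else 1) * (if l = k then g (ω l) else 1)) := by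
      funext ω
      rw [Finset.prod_mul_distrib]
      simp [Finset.prod_ite_eq' Finset.univ i (fun l => f (ω l)),
        Finset.prod_ite_eq' Finset.univ k (fun l => g (ω l))]
    have hFint : ∀ l : Fin m, Integrable (fun z => (if l = i then f z else 1) * (if l = k then g z else 1)) π := by
      intro l
      by_cases hl : l = i
      · subst hl
        simp only [if_pos rfl, if_neg hik]
        simpa using hf.integrable one_le_two
      · have hki : ¬ k = i := fun hh => hik hh.symm
        by_cases hl2 : l = k <;>
          simp [hl, hl2, hki, hg.integrable one_le_two]
    rw [show (∫ ω, f (ω i) * g (ω k) ∂(Measure.pi fun _ : Fin m => π))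
        = ∫ ω, ∏ l, ((if l = i then f (ω l) else 1) * (if l = k then g (ω l) else 1))
          ∂(Measure.pi fun _ : Fin m => π) from by rw [← h],
      pi_prod_integral _ hFint]
    have h2 : ∀ l : Fin m,
        (∫ z, (if l = i then f z else 1) * (if l = k then g z else 1) ∂π)
          = (if l = i then ∫ z, f z ∂π else 1) * (if l = k then ∫ z, g z ∂π else 1) := by
      intro l
      by_cases hl : l = i
      · subst hl
        simp [if_pos rfl, if_neg hik]
      · have hki : ¬ k = i := fun hh => hik hh.symm
        by_cases hl2 : l = k <;> simp [hl, hl2, hki]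
    rw [Finset.prod_congr rfl (fun l _ => h2 l), Finset.prod_mul_distrib]
    simp [Finset.prod_ite_eq' Finset.univ i (fun _ => ∫ z, f z ∂π),
      Finset.prod_ite_eq' Finset.univ k (fun _ => ∫ z, g z ∂π)]

lemma integrable_eval_mul_eval (i k : Fin m) {f g : 𝒵 → ℝ}
    (hf : MemLp f 2 π) (hg : MemLp g 2 π) :
    Integrable (fun ω : Fin m → 𝒵 => f (ω i) * g (ω k)) (Measure.pi fun _ => π) := by
  by_cases hik : i = k
  · subst hik
    exact integrable_comp_eval i (integrable_mul_memL2 hf hg)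
  · have h : (fun ω : Fin m → 𝒵 => f (ω i) * g (ω k))
        = fun ω : Fin m → 𝒵 => ∏ l, ((if l = i then f (ω l) else 1) * (if l = k then g (ω l) else 1)) := by
      funext ω
      rw [Finset.prod_mul_distrib]
      simp [Finset.prod_ite_eq' Finset.univ i (fun l => f (ω l)),
        Finset.prod_ite_eq' Finset.univ k (fun l => g (ω l))]
    rw [h]
    refine pi_prod_integrable (fun l z => (if l = i then f z else 1) * (if l = k then g z else 1)) (fun l => ?_)
    by_cases hl : l = i
    · subst hl
      simp only [if_pos rfl, if_neg hik]
      simpa using hf.integrable one_le_two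
    · have hki : ¬ k = i := fun hh => hik hh.symm
      by_cases hl2 : l = k <;>
        simp [hl, hl2, hki, hg.integrable one_le_two]

end helpers

section part2
variable {𝒵 : Type*} [MeasurableSpace 𝒵] {π : Measure 𝒵} [IsProbabilityMeasure π] {m : ℕ}

lemma cov_pi_sum (F G : Fin m → 𝒵 → ℝ)
    (hF : ∀ i, MemLp (F i) 2 π) (hG : ∀ i, MemLp (G i) 2 π) :
    (∫ ω, (∑ i, F i (ω i)) * (∑ k, G k (ω k)) ∂(Measure.pi fun _ : Fin m => π))
      - (∫ ω, ∑ i, F i (ω i) ∂(Measure.pi fun _ : Fin m => π))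
        * (∫ ω, ∑ k, G k (ω k) ∂(Measure.pi fun _ : Fin m => π))
    = ∑ i, ((∫ z, F i z * G i z ∂π) - (∫ z, F i z ∂π) * (∫ z, G i z ∂π)) := by
  have hFi : ∀ i, Integrable (F i) π := fun i => (hF i).integrable one_le_two
  have hGi : ∀ i, Integrable (G i) π := fun i => (hG i).integrable one_le_two
  have h1 : (∫ ω, ∑ i, F i (ω i) ∂(Measure.pi fun _ : Fin m => π)) = ∑ i, ∫ z, F i z ∂π := by
    rw [integral_finset_sum _ (fun i _ => integrable_comp_eval i (hFi i))]
    exact Finset.sum_congr rfl fun i _ => integral_comp_eval i (hFi i)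
  have h2 : (∫ ω, ∑ k, G k (ω k) ∂(Measure.pi fun _ : Fin m => π)) = ∑ k, ∫ z, G k z ∂π := by
    rw [integral_finset_sum _ (fun k _ => integrable_comp_eval k (hGi k))]
    exact Finset.sum_congr rfl fun k _ => integral_comp_eval k (hGi k)
  have h3 : (∫ ω, (∑ i, F i (ω i)) * (∑ k, G k (ω k)) ∂(Measure.pi fun _ : Fin m => π))
      = ∑ i, ∑ k, (if i = k then ∫ z, F i z * G k z ∂π else (∫ z, F i z ∂π) * ∫ z, G k z ∂π) := by
    have he : (fun ω : Fin m → 𝒵 => (∑ i, F i (ω i)) * (∑ k, G k (ω k)))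
        = fun ω => ∑ i, ∑ k, F i (ω i) * G k (ω k) := by
      funext ω; rw [Finset.sum_mul_sum]
    rw [he, integral_finset_sum _ (fun i _ => integrable_finset_sum _
      (fun k _ => integrable_eval_mul_eval i k (hF i) (hG k)))]
    refine Finset.sum_congr rfl fun i _ => ?_
    rw [integral_finset_sum _ (fun k _ => integrable_eval_mul_eval i k (hF i) (hG k))]
    exact Finset.sum_congr rfl fun k _ => integral_eval_mul_eval i k (hF i) (hG k)
  rw [h1, h2, h3, Finset.sum_mul_sum, ← Finset.sum_sub_distrib]
  refine Finset.sum_congr rfl fun i _ => ?_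
  rw [← Finset.sum_sub_distrib]
  have : ∀ k : Fin m, ((if i = k then ∫ z, F i z * G k z ∂π else (∫ z, F i z ∂π) * ∫ z, G k z ∂π)
      - (∫ z, F i z ∂π) * ∫ z, G k z ∂π)
      = if i = k then ((∫ z, F i z * G i z ∂π) - (∫ z, F i z ∂π) * ∫ z, G i z ∂π) else 0 := by
    intro k
    by_cases hik : i = k
    · subst hik; simp
    · simp [hik]
  rw [Finset.sum_congr rfl fun k _ => this k, Finset.sum_ite_eq]
  simp

lemma cov_sum_sum {ι κ : Type*} [Fintype ι] [Fintype κ] (u : ι → ℝ) (v : κ → ℝ)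
    (f : ι → 𝒵 → ℝ) (h : κ → 𝒵 → ℝ) (hf : ∀ s, MemLp (f s) 2 π) (hh : ∀ t, MemLp (h t) 2 π) :
    (∫ z, (∑ s, u s * f s z) * (∑ t, v t * h t z) ∂π)
      - (∫ z, ∑ s, u s * f s z ∂π) * (∫ z, ∑ t, v t * h t z ∂π)
    = ∑ s, ∑ t, u s * v t *
        ((∫ z, f s z * h t z ∂π) - (∫ z, f s z ∂π) * ∫ z, h t z ∂π) := by
  have hfi : ∀ s, Integrable (f s) π := fun s => (hf s).integrable one_le_two
  have hhi : ∀ t, Integrable (h t) π := fun t => (hh t).integrable one_le_two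
  have h1 : (∫ z, ∑ s, u s * f s z ∂π) = ∑ s, u s * ∫ z, f s z ∂π := by
    rw [integral_finset_sum _ (fun s _ => (hfi s).const_mul (u s))]
    exact Finset.sum_congr rfl fun s _ => integral_const_mul _ _
  have h2 : (∫ z, ∑ t, v t * h t z ∂π) = ∑ t, v t * ∫ z, h t z ∂π := by
    rw [integral_finset_sum _ (fun t _ => (hhi t).const_mul (v t))]
    exact Finset.sum_congr rfl fun t _ => integral_const_mul _ _
  have h3 : (∫ z, (∑ s, u s * f s z) * (∑ t, v t * h t z) ∂π)
      = ∑ s, ∑ t, u s * v t * ∫ z, f s z * h t z ∂π := by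
    have he : (fun z => (∑ s, u s * f s z) * (∑ t, v t * h t z))
        = fun z => ∑ s, ∑ t, u s * v t * (f s z * h t z) := by
      funext z; rw [Finset.sum_mul_sum]
      exact Finset.sum_congr rfl fun s _ => Finset.sum_congr rfl fun t _ => by ring
    rw [he, integral_finset_sum _ (fun s _ => integrable_finset_sum _
      (fun t _ => ((integrable_mul_memL2 (hf s) (hh t)).const_mul (u s * v t))))]
    refine Finset.sum_congr rfl fun s _ => ?_
    rw [integral_finset_sum _ (fun t _ => ((integrable_mul_memL2 (hf s) (hh t)).const_mul (u s * v t)))]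
    exact Finset.sum_congr rfl fun t _ => integral_const_mul _ _
  rw [h1, h2, h3, Finset.sum_mul_sum, ← Finset.sum_sub_distrib]
  refine Finset.sum_congr rfl fun s _ => ?_
  rw [← Finset.sum_sub_distrib]
  exact Finset.sum_congr rfl fun t _ => by ring

end part2

section part3
variable {𝒵 : Type*} {d : ℕ} (g1 g2 : 𝒵 → Fin d → ℝ) {m1 m2 : ℕ}

lemma sum_c1_mul (x : Fin m2 → ℝ) :
    ∑ i, bfmcC1 m1 i * x i
      = (1 / (m1 : ℝ)) * ∑ i ∈ Finset.univ.filter (fun i : Fin m2 => (i : ℕ) < m1), x i := by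
  rw [Finset.mul_sum, Finset.sum_filter]
  refine Finset.sum_congr rfl fun i _ => ?_
  unfold bfmcC1; split_ifs <;> simp

lemma gMFA_eq_sum (A : Matrix (Fin d) (Fin d) ℝ) (ω : Fin m2 → 𝒵) (a : Fin d) :
    gMFA g1 g2 m1 m2 A ω a = ∑ i, bfmcH g1 g2 m1 A a i (ω i) := by
  simp only [gMFA, Pi.add_apply, Matrix.mulVec, dotProduct, bfmcH]
  rw [Finset.sum_add_distrib]
  congr 1
  · exact (sum_c1_mul (fun i => g1 (ω i) a)).symm
  · rw [Finset.sum_comm]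
    refine Finset.sum_congr rfl fun b _ => ?_
    have : ∑ i, A a b * bfmcC2 m1 i * g2 (ω i) b
        = A a b * ((1 / (m2 : ℝ)) * ∑ i, g2 (ω i) b
          - ∑ i, bfmcC1 m1 i * g2 (ω i) b) := by
      simp only [mul_sub, Finset.mul_sum, ← Finset.sum_sub_distrib]
      refine Finset.sum_congr rfl fun i _ => ?_
      unfold bfmcC2; ring
    rw [this, sum_c1_mul (fun i => g2 (ω i) b)]

lemma card_filter_lt (hm12 : m1 ≤ m2) :
    (Finset.univ.filter fun i : Fin m2 => (i : ℕ) < m1).card = m1 := by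
  have he : (Finset.univ.filter fun i : Fin m2 => (i : ℕ) < m1)
      = Finset.map (Fin.castLEEmb hm12) Finset.univ := by
    ext i
    rw [Finset.mem_filter, Finset.mem_map]
    constructor
    · intro hi
      exact ⟨⟨(i : ℕ), hi.2⟩, Finset.mem_univ _, by apply Fin.ext; simp⟩
    · rintro ⟨j, -, rfl⟩
      exact ⟨Finset.mem_univ _, by simpa using j.isLt⟩
  rw [he, Finset.card_map, Finset.card_univ, Fintype.card_fin]

variable (hm1 : 0 < m1) (hm12 : m1 ≤ m2)
include hm1 hm12

lemma sum_c1 : ∑ i : Fin m2, bfmcC1 m1 i = 1 := by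
  have := sum_c1_mul (m1 := m1) (fun _ : Fin m2 => (1:ℝ))
  simp only [mul_one] at this
  rw [this, Finset.sum_const, card_filter_lt hm12, nsmul_eq_mul, mul_one]
  field_simp

lemma sum_c1_c1 : ∑ i : Fin m2, bfmcC1 m1 i * bfmcC1 m1 i = 1 / (m1 : ℝ) := by
  rw [sum_c1_mul (fun i => bfmcC1 m1 i)]
  have : ∀ i ∈ Finset.univ.filter (fun i : Fin m2 => (i : ℕ) < m1),
      bfmcC1 m1 i = 1 / (m1 : ℝ) := by
    intro i hi
    rw [Finset.mem_filter] at hi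
    simp [bfmcC1, hi.2]
  rw [Finset.sum_congr rfl this, Finset.sum_const, card_filter_lt hm12, nsmul_eq_mul]
  have hm : (m1 : ℝ) ≠ 0 := Nat.cast_ne_zero.mpr hm1.ne'
  field_simp

lemma sum_c1_c2 : ∑ i : Fin m2, bfmcC1 m1 i * bfmcC2 m1 i = 1 / (m2 : ℝ) - 1 / (m1 : ℝ) := by
  have h : ∀ i : Fin m2, bfmcC1 m1 i * bfmcC2 m1 i
      = (1 / (m2 : ℝ)) * bfmcC1 m1 i - bfmcC1 m1 i * bfmcC1 m1 i := by
    intro i; unfold bfmcC2; ring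
  rw [Finset.sum_congr rfl fun i _ => h i, Finset.sum_sub_distrib, ← Finset.mul_sum,
    sum_c1 hm1 hm12, sum_c1_c1 hm1 hm12, mul_one]

lemma sum_c2_c2 : ∑ i : Fin m2, bfmcC2 m1 i * bfmcC2 m1 i = 1 / (m1 : ℝ) - 1 / (m2 : ℝ) := by
  have h : ∀ i : Fin m2, bfmcC2 m1 i * bfmcC2 m1 i
      = (1 / (m2 : ℝ)) * (1 / (m2 : ℝ)) - 2 / (m2 : ℝ) * bfmcC1 m1 i
        + bfmcC1 m1 i * bfmcC1 m1 i := by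
    intro i; unfold bfmcC2; ring
  have hm2 : (m2 : ℝ) ≠ 0 := Nat.cast_ne_zero.mpr (lt_of_lt_of_le hm1 hm12).ne'
  rw [Finset.sum_congr rfl fun i _ => h i]
  rw [Finset.sum_add_distrib, Finset.sum_sub_distrib, Finset.sum_const, ← Finset.mul_sum,
    sum_c1 hm1 hm12, sum_c1_c1 hm1 hm12, Finset.card_univ, Fintype.card_fin, nsmul_eq_mul, mul_one]
  field_simp
  ring

end part3

section part4
variable {𝒵 : Type*} [MeasurableSpace 𝒵] {π : Measure 𝒵} [IsProbabilityMeasure π]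
variable {d : ℕ} {g1 g2 : 𝒵 → Fin d → ℝ} {m1 m2 : ℕ}

lemma memL2_H (hg1L2 : ∀ j, MemLp (fun z => g1 z j) 2 π)
    (hg2L2 : ∀ j, MemLp (fun z => g2 z j) 2 π) {m1 m2 : ℕ}
    (A : Matrix (Fin d) (Fin d) ℝ) (a : Fin d) (i : Fin m2) :
    MemLp (bfmcH g1 g2 m1 A a i) 2 π := by
  have h1 : MemLp (fun z => bfmcC1 m1 i * g1 z a) 2 π := (hg1L2 a).const_mul _
  have h2 : MemLp (fun z => ∑ b, (A a b * bfmcC2 m1 i) * g2 z b) 2 π :=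
    memLp_finset_sum Finset.univ (fun b _ => (hg2L2 b).const_mul _)
  exact h1.add h2

lemma bfmcH_as_option_sum {m1 m2 : ℕ} (A : Matrix (Fin d) (Fin d) ℝ) (a : Fin d)
    (i : Fin m2) :
    bfmcH g1 g2 m1 A a i = fun z => ∑ s : Option (Fin d),
      (Option.elim s (bfmcC1 m1 i) (fun b' => A a b' * bfmcC2 m1 i))
        * (Option.elim s (fun z => g1 z a) (fun b' z => g2 z b') z) := by
  funext z
  rw [Fintype.sum_option]
  rfl

/-- covariance expansion for a single index `i` -/
lemma cov_H_expand (hg1L2 : ∀ j, MemLp (fun z => g1 z j) 2 π)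
    (hg2L2 : ∀ j, MemLp (fun z => g2 z j) 2 π) {m1 m2 : ℕ}
    (A A' : Matrix (Fin d) (Fin d) ℝ) (a b : Fin d) (i : Fin m2) :
    (∫ z, bfmcH g1 g2 m1 A a i z * bfmcH g1 g2 m1 A' b i z ∂π)
      - (∫ z, bfmcH g1 g2 m1 A a i z ∂π) * (∫ z, bfmcH g1 g2 m1 A' b i z ∂π)
    = bfmcC1 m1 i * bfmcC1 m1 i * covMatrix π g1 g1 a b
      + bfmcC1 m1 i * bfmcC2 m1 i * (∑ t, A' b t * covMatrix π g1 g2 a t)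
      + bfmcC2 m1 i * bfmcC1 m1 i * (∑ s, A a s * covMatrix π g2 g1 s b)
      + bfmcC2 m1 i * bfmcC2 m1 i
          * (∑ s, ∑ t, A a s * A' b t * covMatrix π g2 g2 s t) := by
  have hf : ∀ s : Option (Fin d),
      MemLp (Option.elim s (fun z => g1 z a) (fun b' z => g2 z b')) 2 π := by
    rintro (_ | b') <;> simp [hg1L2 a, hg2L2 _]
  have hh : ∀ s : Option (Fin d),
      MemLp (Option.elim s (fun z => g1 z b) (fun b' z => g2 z b')) 2 π := by
    rintro (_ | b') <;> simp [hg1L2 b, hg2L2 _]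
  rw [bfmcH_as_option_sum A a i, bfmcH_as_option_sum A' b i]
  rw [cov_sum_sum (𝒵 := 𝒵) (π := π)
      (fun s => Option.elim s (bfmcC1 m1 i) (fun b' => A a b' * bfmcC2 m1 i))
      (fun t => Option.elim t (bfmcC1 m1 i) (fun b' => A' b b' * bfmcC2 m1 i))
      _ _ hf hh]
  rw [Fintype.sum_option, Fintype.sum_option,
    Finset.sum_congr rfl (fun s _ => Fintype.sum_option _),
    Finset.sum_add_distrib, ← add_assoc]
  refine congrArg₂ (· + ·) (congrArg₂ (· + ·) (congrArg₂ (· + ·) ?_ ?_) ?_) ?_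
  · simp only [Option.elim, covMatrix, Matrix.of_apply]; try ring
  · rw [Finset.mul_sum]
    exact Finset.sum_congr rfl fun t _ => by
      simp only [Option.elim, covMatrix, Matrix.of_apply]; try ring
  · rw [Finset.mul_sum]
    exact Finset.sum_congr rfl fun t _ => by
      simp only [Option.elim, covMatrix, Matrix.of_apply]; try ring
  · rw [Finset.mul_sum]
    refine Finset.sum_congr rfl fun t _ => ?_
    rw [Finset.mul_sum]
    exact Finset.sum_congr rfl fun t' _ => by
      simp only [Option.elim, covMatrix, Matrix.of_apply]; try ring
end part4

section part5
variable {𝒵 : Type*} [MeasurableSpace 𝒵] {π : Measure 𝒵} [IsProbabilityMeasure π]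
variable {d : ℕ} {g1 g2 : 𝒵 → Fin d → ℝ} {m1 m2 : ℕ}

lemma covMatrix_transpose (V W : 𝒵 → Fin d → ℝ) :
    (covMatrix π V W)ᵀ = covMatrix π W V := by
  ext i j
  simp only [Matrix.transpose_apply, covMatrix, Matrix.of_apply]
  have h : (fun z => V z j * W z i) = fun z => W z i * V z j := by funext z; ring
  rw [h, mul_comm]

lemma covMatrix_posSemidef (hg2L2 : ∀ j, MemLp (fun z => g2 z j) 2 π) :
    (covMatrix π g2 g2).PosSemidef := by
  refine Matrix.PosSemidef.of_dotProduct_mulVec_nonneg ?_ ?_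
  · show _ = _
    ext i j
    rw [Matrix.conjTranspose_apply, star_trivial]
    simp only [covMatrix, Matrix.of_apply]
    have h : (fun z => g2 z j * g2 z i) = fun z => g2 z i * g2 z j := by funext z; ring
    rw [h, mul_comm (∫ z, g2 z j ∂π)]
  · intro x
    have hx : star x = x := funext fun i => star_trivial _
    rw [hx]
    have hdot : x ⬝ᵥ (covMatrix π g2 g2 *ᵥ x)
        = ∑ a, ∑ b, x a * x b *
          ((∫ z, g2 z a * g2 z b ∂π) - (∫ z, g2 z a ∂π) * ∫ z, g2 z b ∂π) := by
      simp only [dotProduct, Matrix.mulVec, covMatrix, Matrix.of_apply]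
      rw [Finset.sum_congr rfl fun a _ => Finset.mul_sum _ _ _]
      exact Finset.sum_congr rfl fun a _ => Finset.sum_congr rfl fun b _ => by ring
    rw [hdot, ← cov_sum_sum x x (fun a z => g2 z a) (fun b z => g2 z b)
      (fun a => hg2L2 a) (fun b => hg2L2 b)]
    set f : 𝒵 → ℝ := fun z => ∑ a, x a * g2 z a with hfdef
    have hf2 : MemLp f 2 π :=
      memLp_finset_sum Finset.univ (fun a _ => (hg2L2 a).const_mul (x a))
    have hvar := ProbabilityTheory.variance_eq_sub hf2
    have hsq : (fun z => f z ^ 2) = fun z => f z * f z := by funext z; ring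
    have : (∫ z, f z * f z ∂π) - (∫ z, f z ∂π) * ∫ z, f z ∂π
        = ProbabilityTheory.variance f π := by
      rw [hvar, ← hsq]
      simp [sq]
    calc (0:ℝ) ≤ ProbabilityTheory.variance f π := ProbabilityTheory.variance_nonneg _ _
    _ = _ := this.symm

lemma covMatrix_gMFA (hg1L2 : ∀ j, MemLp (fun z => g1 z j) 2 π)
    (hg2L2 : ∀ j, MemLp (fun z => g2 z j) 2 π)
    (hm1 : 0 < m1) (hm12 : m1 ≤ m2) (A A' : Matrix (Fin d) (Fin d) ℝ) :
    covMatrix (Measure.pi fun _ : Fin m2 => π) (gMFA g1 g2 m1 m2 A) (gMFA g1 g2 m1 m2 A')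
    = (1 / (m1 : ℝ)) • covMatrix π g1 g1
      + (1 / (m2 : ℝ) - 1 / (m1 : ℝ)) •
          (covMatrix π g1 g2 * A'ᵀ + A * covMatrix π g2 g1)
      + (1 / (m1 : ℝ) - 1 / (m2 : ℝ)) • (A * covMatrix π g2 g2 * A'ᵀ) := by
  ext a b
  show (∫ ω, gMFA g1 g2 m1 m2 A ω a * gMFA g1 g2 m1 m2 A' ω b
        ∂(Measure.pi fun _ : Fin m2 => π))
      - (∫ ω, gMFA g1 g2 m1 m2 A ω a ∂(Measure.pi fun _ : Fin m2 => π))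
        * (∫ ω, gMFA g1 g2 m1 m2 A' ω b ∂(Measure.pi fun _ : Fin m2 => π)) = _
  simp only [gMFA_eq_sum g1 g2]
  rw [cov_pi_sum (fun i => bfmcH g1 g2 m1 A a i) (fun i => bfmcH g1 g2 m1 A' b i)
    (fun i => memL2_H hg1L2 hg2L2 A a i) (fun i => memL2_H hg1L2 hg2L2 A' b i)]
  rw [Finset.sum_congr rfl fun i _ => cov_H_expand hg1L2 hg2L2 A A' a b i]
  rw [Finset.sum_add_distrib, Finset.sum_add_distrib, Finset.sum_add_distrib,
    ← Finset.sum_mul, ← Finset.sum_mul, ← Finset.sum_mul, ← Finset.sum_mul,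
    Finset.sum_congr rfl (fun i (_ : i ∈ Finset.univ) =>
      mul_comm (bfmcC2 m1 i) (bfmcC1 m1 i)),
    sum_c1_c1 hm1 hm12, sum_c1_c2 hm1 hm12, sum_c2_c2 hm1 hm12]
  simp only [Matrix.add_apply, Matrix.smul_apply, Matrix.mul_apply,
    Matrix.transpose_apply, smul_eq_mul]
  have h12 : ∑ t, A' b t * covMatrix π g1 g2 a t
      = ∑ t, covMatrix π g1 g2 a t * A' b t :=
    Finset.sum_congr rfl fun t _ => mul_comm _ _
  have h22 : ∑ s, ∑ t, A a s * A' b t * covMatrix π g2 g2 s t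
      = ∑ t, (∑ s, A a s * covMatrix π g2 g2 s t) * A' b t := by
    rw [Finset.sum_comm]
    refine Finset.sum_congr rfl fun t _ => ?_
    rw [Finset.sum_mul]
    exact Finset.sum_congr rfl fun s _ => by ring
  rw [h12, h22]
  ring

end part5

/-- Loewner minimality of the optimal matrix coefficient: with C₂₂
invertible and A* = C₁₂ C₂₂⁻¹, for every A the difference
Cov[ĝ^A_MF, ĝ^A_MF] − Cov[ĝ^{A*}_MF, ĝ^{A*}_MF] is symmetric positive semidefinite. -/
theorem stmt_13 {𝒵 : Type*} [MeasurableSpace 𝒵] (π : Measure 𝒵) [IsProbabilityMeasure π]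
    {d' : ℕ} (g1 g2 : 𝒵 → Fin d' → ℝ)
    (hg1m : ∀ j, Measurable fun z => g1 z j) (hg2m : ∀ j, Measurable fun z => g2 z j)
    (hg1L2 : ∀ j, MemLp (fun z => g1 z j) 2 π) (hg2L2 : ∀ j, MemLp (fun z => g2 z j) 2 π)
    {m1 m2 : ℕ} (hm1 : 0 < m1) (hm12 : m1 ≤ m2)
    (hC22 : IsUnit (covMatrix π g2 g2).det)
    (Astar : Matrix (Fin d') (Fin d') ℝ)
    (hAstar : Astar = covMatrix π g1 g2 * (covMatrix π g2 g2)⁻¹) :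
    ∀ A : Matrix (Fin d') (Fin d') ℝ,
      (covMatrix (Measure.pi fun _ : Fin m2 => π) (gMFA g1 g2 m1 m2 A) (gMFA g1 g2 m1 m2 A)
        - covMatrix (Measure.pi fun _ : Fin m2 => π)
            (gMFA g1 g2 m1 m2 Astar) (gMFA g1 g2 m1 m2 Astar)).PosSemidef := by
  intro A
  set C11 := covMatrix π g1 g1 with hC11def
  set C12 := covMatrix π g1 g2 with hC12def
  set C21 := covMatrix π g2 g1 with hC21def
  set C22 := covMatrix π g2 g2 with hC22def
  have h22sym : C22ᵀ = C22 := covMatrix_transpose g2 g2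
  have h12t : C12ᵀ = C21 := covMatrix_transpose g1 g2
  have h1 : Astar * C22 = C12 := by
    rw [hAstar, Matrix.mul_assoc, Matrix.nonsing_inv_mul _ hC22, Matrix.mul_one]
  have h2 : C22 * Astarᵀ = C21 := by
    rw [hAstar, Matrix.transpose_mul, Matrix.transpose_nonsing_inv, h22sym, h12t,
      ← Matrix.mul_assoc, Matrix.mul_nonsing_inv _ hC22, Matrix.one_mul]
  have hAC : Astar * C21 = Astar * C22 * Astarᵀ := by rw [← h2, Matrix.mul_assoc]
  have hCA : C12 * Astarᵀ = Astar * C22 * Astarᵀ := by rw [← h1]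
  set e : ℝ := 1 / (m1 : ℝ) - 1 / (m2 : ℝ) with hedef
  have hexp : (A - Astar) * C22 * (A - Astar)ᵀ
      = A * C22 * Aᵀ - A * C21 - C12 * Aᵀ + Astar * C22 * Astarᵀ := by
    rw [Matrix.transpose_sub, ← h2, ← h1]
    noncomm_ring
  have hdiff : covMatrix (Measure.pi fun _ : Fin m2 => π)
        (gMFA g1 g2 m1 m2 A) (gMFA g1 g2 m1 m2 A)
      - covMatrix (Measure.pi fun _ : Fin m2 => π)
        (gMFA g1 g2 m1 m2 Astar) (gMFA g1 g2 m1 m2 Astar)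
      = e • ((A - Astar) * C22 * (A - Astar)ᵀ) := by
    rw [covMatrix_gMFA hg1L2 hg2L2 hm1 hm12 A A,
      covMatrix_gMFA hg1L2 hg2L2 hm1 hm12 Astar Astar, hexp, hAC, hCA]
    module
  rw [hdiff]
  have hpsd : ((A - Astar) * C22 * (A - Astar)ᵀ).PosSemidef := by
    have h := (covMatrix_posSemidef hg2L2).mul_mul_conjTranspose_same (A - Astar)
    have hct : (A - Astar)ᴴ = (A - Astar)ᵀ := by
      ext i j; rw [Matrix.conjTranspose_apply, Matrix.transpose_apply, star_trivial]
    rwa [hct] at h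
  refine Matrix.PosSemidef.of_dotProduct_mulVec_nonneg ?_ ?_
  · show _ = _
    rw [Matrix.conjTranspose_smul, hpsd.1, star_trivial]
  · intro x
    have hx : star x = x := funext fun i => star_trivial _
    rw [hx, Matrix.smul_mulVec, dotProduct_smul, smul_eq_mul]
    have he : (0:ℝ) ≤ e := by
      rw [hedef]
      have hm2 : (0:ℝ) < m2 := by exact_mod_cast lt_of_lt_of_le hm1 hm12
      have : 1 / (m2:ℝ) ≤ 1 / (m1:ℝ) :=
        one_div_le_one_div_of_le (by exact_mod_cast hm1) (by exact_mod_cast hm12)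
      linarith
    refine mul_nonneg he ?_
    have := hpsd.dotProduct_mulVec_nonneg x
    rwa [hx] at this
end
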